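/- arXiv:0906.5238 — 9 statements merged into one kernel-verified Lean document; each statement's English description precedes it below -/
import Mathlib

section
/- For any integers a₀, a₁, a₂, a₃, a₄, with A₀ = 3(8a₀a₂ − 3a₁²), A₁ = 12(6a₀a₃ − a₁a₂), A₂ = 6(3a₁a₃ + 24a₀a₄ − 2a₂²), A₃ = 12(6a₁a₄ − a₂a₃), A₄ = 3(8a₂a₄ − 3a₃²) and J = 2a₂³ − 9a₁a₂a₃ + 27a₁²a₄ − 72a₀a₂a₄ + 27a₀a₃², the following two polynomial identities hold: A₀A₃² − A₄A₁² = 12³·(a₀a₃² − a₄a₁²)·J, and A₃³ + 8A₁A₄² − 4A₂A₃A₄ = 12³·(a₃³ + 8a₁a₄² − 4a₂a₃a₄)·J. In particular, if J = 0 then A₀A₃² = A₄A₁² and A₃³ + 8A₁A₄² = 4A₂A₃A₄. -/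
/-- Identities relating the Hessian coefficients `A₀,…,A₄` of a binary quartic form
to its invariant `J`:  `A₀A₃² - A₄A₁² = 12³(a₀a₃² - a₄a₁²)J` and
`A₃³ + 8A₁A₄² - 4A₂A₃A₄ = 12³(a₃³ + 8a₁a₄² - 4a₂a₃a₄)J`.  In particular if `J = 0`
then `A₀A₃² = A₄A₁²` and `A₃³ + 8A₁A₄² = 4A₂A₃A₄`. -/
theorem hessian_coeff_identities
    (a₀ a₁ a₂ a₃ a₄ A₀ A₁ A₂ A₃ A₄ J : ℤ)
    (hA₀ : A₀ = 3*(8*a₀*a₂ - 3*a₁^2))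
    (hA₁ : A₁ = 12*(6*a₀*a₃ - a₁*a₂))
    (hA₂ : A₂ = 6*(3*a₁*a₃ + 24*a₀*a₄ - 2*a₂^2))
    (hA₃ : A₃ = 12*(6*a₁*a₄ - a₂*a₃))
    (hA₄ : A₄ = 3*(8*a₂*a₄ - 3*a₃^2))
    (hJ : J = 2*a₂^3 - 9*a₁*a₂*a₃ + 27*a₁^2*a₄ - 72*a₀*a₂*a₄ + 27*a₀*a₃^2) :
    A₀*A₃^2 - A₄*A₁^2 = 12^3*(a₀*a₃^2 - a₄*a₁^2)*J ∧
    A₃^3 + 8*A₁*A₄^2 - 4*A₂*A₃*A₄ = 12^3*(a₃^3 + 8*a₁*a₄^2 - 4*a₂*a₃*a₄)*J ∧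
    (J = 0 → A₀*A₃^2 = A₄*A₁^2 ∧ A₃^3 + 8*A₁*A₄^2 = 4*A₂*A₃*A₄) := by
  subst hA₀ hA₁ hA₂ hA₃ hA₄ hJ
  refine ⟨by ring, by ring, fun h => ⟨?_, ?_⟩⟩
  · linear_combination (12^3*(a₀*a₃^2 - a₄*a₁^2))*h
  · linear_combination (12^3*(a₃^3 + 8*a₁*a₄^2 - 4*a₂*a₃*a₄))*h
end

section
/- Let F(x,y) = a₀x⁴ + a₁x³y + a₂x²y² + a₃xy³ + a₄y⁴ be a binary quartic form with integer coefficients such that J_F = 0 and A₃A₄ ≠ 0, where A₀,…,A₄ are the coefficients of the Hessian H of F. Then, as an identity of polynomials in x and y, 4A₃²A₄·H(x,y) = (2A₁A₄x² + A₃²xy + 2A₃A₄y²)²; that is, H(x,y) = W(x,y)²/(4A₃²A₄) with W(x,y) = 2A₁A₄x² + A₃²xy + 2A₄A₃y². -/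
/-- If `J_F = 0` and `A₃A₄ ≠ 0`, then the Hessian of `F` satisfies
`4A₃²A₄·H(x,y) = (2A₁A₄x² + A₃²xy + 2A₃A₄y²)²` identically. -/
theorem hessian_is_square_of_quadratic
    (a₀ a₁ a₂ a₃ a₄ A₀ A₁ A₂ A₃ A₄ : ℤ)
    (hA₀ : A₀ = 3*(8*a₀*a₂ - 3*a₁^2))
    (hA₁ : A₁ = 12*(6*a₀*a₃ - a₁*a₂))
    (hA₂ : A₂ = 6*(3*a₁*a₃ + 24*a₀*a₄ - 2*a₂^2))
    (hA₃ : A₃ = 12*(6*a₁*a₄ - a₂*a₃))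
    (hA₄ : A₄ = 3*(8*a₂*a₄ - 3*a₃^2))
    (hJ : 2*a₂^3 - 9*a₁*a₂*a₃ + 27*a₁^2*a₄ - 72*a₀*a₂*a₄ + 27*a₀*a₃^2 = 0)
    (hA34 : A₃ * A₄ ≠ 0) :
    ∀ x y : ℤ,
      4*A₃^2*A₄ * (A₀*x^4 + A₁*x^3*y + A₂*x^2*y^2 + A₃*x*y^3 + A₄*y^4)
        = (2*A₁*A₄*x^2 + A₃^2*x*y + 2*A₃*A₄*y^2)^2 := by
  intro x y
  subst hA₀ hA₁ hA₂ hA₃ hA₄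
  linear_combination
    ((4*(3*(8*a₂*a₄ - 3*a₃^2))*(1728*a₀*a₃^2 - 1728*a₁^2*a₄))*x^4
      + (-995328*a₁^2*a₄^3 + 663552*a₁*a₂*a₃*a₄^2 - 124416*a₁*a₃^3*a₄
         - 82944*a₂^2*a₃^2*a₄ + 20736*a₂*a₃^4)*x^2*y^2) * hJ
end

section
/- Let F(x,y) = a₀x⁴ + a₁x³y + a₂x²y² + a₃xy³ + a₄y⁴ be a binary quartic form with integer coefficients such that J_F = 0 and A₃A₄ ≠ 0, where A₀,…,A₄ are the coefficients of the Hessian of F. Then |A₃⁴ − 16A₁A₄²A₃| = |48A₃²A₄·I_F|, where I_F = a₂² − 3a₁a₃ + 12a₀a₄. -/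
/-- If `J_F = 0` and `A₃A₄ ≠ 0`, then `|A₃⁴ - 16A₁A₄²A₃| = |48A₃²A₄·I_F|`. -/
theorem hessian_coeff_abs_identity
    (a₀ a₁ a₂ a₃ a₄ A₁ A₃ A₄ : ℤ)
    (hA₁ : A₁ = 12*(6*a₀*a₃ - a₁*a₂))
    (hA₃ : A₃ = 12*(6*a₁*a₄ - a₂*a₃))
    (hA₄ : A₄ = 3*(8*a₂*a₄ - 3*a₃^2))
    (hJ : 2*a₂^3 - 9*a₁*a₂*a₃ + 27*a₁^2*a₄ - 72*a₀*a₂*a₄ + 27*a₀*a₃^2 = 0)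
    (hA34 : A₃ * A₄ ≠ 0) :
    |A₃^4 - 16*A₁*A₄^2*A₃| = |48*A₃^2*A₄*(a₂^2 - 3*a₁*a₃ + 12*a₀*a₄)| := by
  have key : A₃^4 - 16*A₁*A₄^2*A₃ = 48*A₃^2*A₄*(a₂^2 - 3*a₁*a₃ + 12*a₀*a₄) := by
    subst hA₁ hA₃ hA₄
    linear_combination (41472*a₂*a₃^4 - 82944*a₂^2*a₃^2*a₄ - 248832*a₁*a₃^3*a₄
      + 331776*a₁*a₂*a₃*a₄^2 + 995328*a₁^2*a₄^3) * hJ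
  rw [key]
end

section
/- Let F(x,y) be an irreducible binary quartic form with integer coefficients such that J_F = 0. Then there exists a binary quartic form G equivalent to F (i.e. G(x,y) = F(bx + cy, dx + ey) for some integers b,c,d,e with be − cd = ±1) such that the coefficients A₃(G) and A₄(G) of the Hessian of G satisfy A₃(G)·A₄(G) ≠ 0. -/
open Polynomial

/-- Lemma 3.1: every irreducible integer binary quartic form `F` with `J_F = 0` is
`GL₂(ℤ)`-equivalent to a quartic form `G` whose Hessian coefficients satisfy
`A₃(G)·A₄(G) ≠ 0`. -/
theorem exists_equivalent_form_with_A3A4_ne_zero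
    (a₀ a₁ a₂ a₃ a₄ : ℤ) (F : ℤ → ℤ → ℤ)
    (hF : ∀ x y : ℤ, F x y =
      a₀*x^4 + a₁*x^3*y + a₂*x^2*y^2 + a₃*x*y^3 + a₄*y^4)
    (ha₀ : a₀ ≠ 0)
    (hirr : Irreducible (C (a₀:ℚ) * X^4 + C (a₁:ℚ) * X^3 + C (a₂:ℚ) * X^2
        + C (a₃:ℚ) * X + C (a₄:ℚ) : ℚ[X]))
    (hJ : 2*a₂^3 - 9*a₁*a₂*a₃ + 27*a₁^2*a₄ - 72*a₀*a₂*a₄ + 27*a₀*a₃^2 = 0) :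
    ∃ b c d e g₀ g₁ g₂ g₃ g₄ : ℤ,
      (b*e - c*d = 1 ∨ b*e - c*d = -1) ∧
      (∀ x y : ℤ, g₀*x^4 + g₁*x^3*y + g₂*x^2*y^2 + g₃*x*y^3 + g₄*y^4
        = F (b*x + c*y) (d*x + e*y)) ∧
      12*(6*g₁*g₄ - g₂*g₃) * (3*(8*g₂*g₄ - 3*g₃^2)) ≠ 0 := by
  have haq : (a₀ : ℚ) ≠ 0 := Int.cast_ne_zero.mpr ha₀
  -- Step 1: the first three Hessian coefficients cannot all vanish.
  have key : ¬(8*a₀*a₂ - 3*a₁^2 = 0 ∧ 6*a₀*a₃ - a₁*a₂ = 0 ∧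
      24*a₀*a₄ + 3*a₁*a₃ - 2*a₂^2 = 0) := by
    rintro ⟨h0, h1, h2⟩
    have h0q : 8*(a₀:ℚ)*a₂ - 3*(a₁:ℚ)^2 = 0 := by exact_mod_cast congrArg (Int.cast : ℤ → ℚ) h0
    have h1q : 6*(a₀:ℚ)*a₃ - (a₁:ℚ)*a₂ = 0 := by exact_mod_cast congrArg (Int.cast : ℤ → ℚ) h1
    have h2q : 24*(a₀:ℚ)*a₄ + 3*(a₁:ℚ)*a₃ - 2*(a₂:ℚ)^2 = 0 := by
      exact_mod_cast congrArg (Int.cast : ℤ → ℚ) h2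
    have ha2 : (a₂:ℚ) = 3*(a₁:ℚ)^2/(8*a₀) := by
      field_simp
      linarith [h0q]
    have ha3 : (a₃:ℚ) = (a₁:ℚ)^3/(16*a₀^2) := by
      field_simp
      linear_combination (8*(a₀:ℚ)/3) * h1q + ((a₁:ℚ)/3) * h0q
    have ha4 : (a₄:ℚ) = (a₁:ℚ)^4/(256*a₀^3) := by
      field_simp
      linear_combination ((8/3)*(a₀:ℚ)*a₂ + (1/3)*(a₁:ℚ)^2) * h0q
        - (16/3)*(a₀:ℚ)*(a₁:ℚ) * h1q + (32/3)*(a₀:ℚ)^2 * h2q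
    have hroot : (C (a₀:ℚ) * X^4 + C (a₁:ℚ) * X^3 + C (a₂:ℚ) * X^2
        + C (a₃:ℚ) * X + C (a₄:ℚ) : ℚ[X]).IsRoot (-(a₁:ℚ)/(4*a₀)) := by
      simp only [IsRoot, eval_add, eval_mul, eval_pow, eval_C, eval_X]
      rw [ha2, ha3, ha4]
      field_simp
      ring
    have hdeg1 : (C (a₀:ℚ) * X^4 + C (a₁:ℚ) * X^3 + C (a₂:ℚ) * X^2
        + C (a₃:ℚ) * X + C (a₄:ℚ) : ℚ[X]).degree = 1 :=
      Polynomial.degree_eq_one_of_irreducible_of_root hirr hroot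
    have hdeg4 : (C (a₀:ℚ) * X^4 + C (a₁:ℚ) * X^3 + C (a₂:ℚ) * X^2
        + C (a₃:ℚ) * X + C (a₄:ℚ) : ℚ[X]).degree = 4 := by
      compute_degree!
    rw [hdeg1] at hdeg4
    exact absurd hdeg4 (by decide)
  -- the Hessian of F evaluated at (1,k)
  set P : ℤ → ℤ := fun k =>
    3*(8*a₀*a₂ - 3*a₁^2) + 12*(6*a₀*a₃ - a₁*a₂)*k
      + (144*a₀*a₄ + 18*a₁*a₃ - 12*a₂^2)*k^2
      + 12*(6*a₁*a₄ - a₂*a₃)*k^3 + 3*(8*a₂*a₄ - 3*a₃^2)*k^4 with hP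
  -- Step 2: find k with P k ≠ 0
  have hk : ∃ k : ℤ, P k ≠ 0 := by
    by_contra hc
    push_neg at hc
    have e0 := hc 0
    have e1 := hc 1
    have e2 := hc 2
    have e3 := hc 3
    have e4 := hc 4
    simp only [hP] at e0 e1 e2 e3 e4
    ring_nf at e0 e1 e2 e3 e4
    exact key ⟨by linarith, by linarith, by linarith⟩
  obtain ⟨k, hk⟩ := hk
  -- base transformation: (x,y) ↦ (y, -x + k y)
  set g0 : ℤ := a₄ with hg0
  set g1 : ℤ := -a₃ - 4*a₄*k with hg1
  set g2 : ℤ := a₂ + 3*a₃*k + 6*a₄*k^2 with hg2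
  set g3 : ℤ := -a₁ - 2*a₂*k - 3*a₃*k^2 - 4*a₄*k^3 with hg3
  set g4 : ℤ := a₀ + a₁*k + a₂*k^2 + a₃*k^3 + a₄*k^4 with hg4
  have hB4 : 3*(8*g2*g4 - 3*g3^2) = P k := by simp only [hg2, hg3, hg4, hP]; ring
  by_cases hB3 : 12*(6*g1*g4 - g2*g3) = 0
  · -- shear by t = 1 : (x,y) ↦ (x + y, (k-1)x + k y)
    refine ⟨1, 1, k-1, k, a₀ + a₁*(k-1) + a₂*(k-1)^2 + a₃*(k-1)^3 + a₄*(k-1)^4,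
      4*a₀ - 3*a₁ + 2*a₂ - a₃ + (4*a₁ - 6*a₂ + 6*a₃ - 4*a₄)*k
        + (4*a₂ - 9*a₃ + 12*a₄)*k^2 + (4*a₃ - 12*a₄)*k^3 + 4*a₄*k^4,
      6*a₀ - 3*a₁ + a₂ + (6*a₁ - 6*a₂ + 3*a₃)*k + (6*a₂ - 9*a₃ + 6*a₄)*k^2
        + (6*a₃ - 12*a₄)*k^3 + 6*a₄*k^4,
      4*a₀ - a₁ + (4*a₁ - 2*a₂)*k + (4*a₂ - 3*a₃)*k^2 + (4*a₃ - 4*a₄)*k^3 + 4*a₄*k^4,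
      a₀ + a₁*k + a₂*k^2 + a₃*k^3 + a₄*k^4, Or.inl (by ring), ?_, ?_⟩
    · intro x y; rw [hF]; ring
    · have hB4' : 3*(8*(6*a₀ - 3*a₁ + a₂ + (6*a₁ - 6*a₂ + 3*a₃)*k + (6*a₂ - 9*a₃ + 6*a₄)*k^2
          + (6*a₃ - 12*a₄)*k^3 + 6*a₄*k^4)*(a₀ + a₁*k + a₂*k^2 + a₃*k^3 + a₄*k^4)
          - 3*(4*a₀ - a₁ + (4*a₁ - 2*a₂)*k + (4*a₂ - 3*a₃)*k^2 + (4*a₃ - 4*a₄)*k^3 + 4*a₄*k^4)^2)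
          = P k := by simp only [hP]; ring
      have hB3' : 12*(6*(4*a₀ - 3*a₁ + 2*a₂ - a₃ + (4*a₁ - 6*a₂ + 6*a₃ - 4*a₄)*k
          + (4*a₂ - 9*a₃ + 12*a₄)*k^2 + (4*a₃ - 12*a₄)*k^3 + 4*a₄*k^4)
          *(a₀ + a₁*k + a₂*k^2 + a₃*k^3 + a₄*k^4)
          - (6*a₀ - 3*a₁ + a₂ + (6*a₁ - 6*a₂ + 3*a₃)*k + (6*a₂ - 9*a₃ + 6*a₄)*k^2
          + (6*a₃ - 12*a₄)*k^3 + 6*a₄*k^4)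
          *(4*a₀ - a₁ + (4*a₁ - 2*a₂)*k + (4*a₂ - 3*a₃)*k^2 + (4*a₃ - 4*a₄)*k^3 + 4*a₄*k^4))
          = 12*(6*g1*g4 - g2*g3) + 4*(P k) := by
        simp only [hg1, hg2, hg3, hg4, hP]; ring
      rw [hB4', hB3', hB3, zero_add]
      exact mul_ne_zero (by simpa using hk) hk
  · refine ⟨0, 1, -1, k, g0, g1, g2, g3, g4, Or.inl (by ring), ?_, ?_⟩
    · intro x y
      rw [hF]
      simp only [hg0, hg1, hg2, hg3, hg4]
      ring
    · rw [hB4]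
      exact mul_ne_zero hB3 hk
end

section
/- Let w be a complex number with |w| = 1, set z = 1 − w⁴, and let ω be a fourth root of unity at minimal distance to w, i.e. |ω − w| = min_{0≤k≤3} |e^{2kπi/4} − w|. Then: (a) if 1 ≤ |z| < 2, then |ω − w| ≤ (π/8)·|z|; (b) if 0 < |z| < 1, then |ω − w| < (π/12)·|z|. -/
/-!
Multiplying by `conj ω` moves `ω` to `1` and preserves both `‖ω - w‖` and `w ^ 4`, so we may
take `ω = 1`. Then `1` being the nearest fourth root of unity means `c = Re w ≥ |Im w|`, i.e.
`c ≥ 1 / √2`. Since `‖1 - w‖² = 2 - 2c` and `‖1 - w⁴‖² = 16c²(1 - c²)`, the ratio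
`‖1 - w‖² / ‖z‖²` equals `1 / (8c²(1 + c))`, and the two bounds become `π²c²(1 + c) ≥ 8` and
`π²c²(1 + c) > 18`. The first holds for all `c ≥ 1 / √2`, the second once `‖z‖ < 1` forces
`c² > (2 + √3) / 4`.
-/

open ComplexConjugate Real

namespace Complex

lemma re_sq_add_im_sq_of_norm_eq_one {u : ℂ} (hu : ‖u‖ = 1) : u.re ^ 2 + u.im ^ 2 = 1 := by
  have h := sq_norm_sub_sq_re u
  rw [hu] at h
  linarith

lemma sq_norm_one_sub_of_norm_eq_one {u : ℂ} (hu : ‖u‖ = 1) : ‖1 - u‖ ^ 2 = 2 - 2 * u.re := by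
  rw [Complex.sq_norm, normSq_apply]
  simp only [sub_re, sub_im, one_re, one_im]
  linear_combination re_sq_add_im_sq_of_norm_eq_one hu

lemma sq_norm_one_sub_pow_four_of_norm_eq_one {u : ℂ} (hu : ‖u‖ = 1) :
    ‖1 - u ^ 4‖ ^ 2 = 16 * u.re ^ 2 * (1 - u.re ^ 2) := by
  have hre : (u ^ 4).re = 8 * u.re ^ 4 - 8 * u.re ^ 2 + 1 := by
    simp only [pow_succ, pow_zero, one_mul, mul_re, mul_im]
    linear_combination (u.re ^ 2 + u.im ^ 2 + 1 - 8 * u.re ^ 2) *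
      re_sq_add_im_sq_of_norm_eq_one hu
  rw [sq_norm_one_sub_of_norm_eq_one (by rw [norm_pow, hu, one_pow]), hre]
  ring

lemma norm_sub_conj_mul {ω : ℂ} (hω : ‖ω‖ = 1) (ζ w : ℂ) :
    ‖ζ - conj ω * w‖ = ‖ζ * ω - w‖ := by
  have hωω : ω * conj ω = 1 := by rw [mul_conj', hω]; norm_num
  have h : ω * (ζ - conj ω * w) = ζ * ω - w := by
    linear_combination (-w) * hωω
  rw [← h, norm_mul, hω, one_mul]

lemma forall_norm_one_sub_conj_mul_le {n : ℕ} {ω w : ℂ} (hn : n ≠ 0) (hω : ω ^ n = 1)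
    (hmin : ∀ ω' : ℂ, ω' ^ n = 1 → ‖ω - w‖ ≤ ‖ω' - w‖) (ζ : ℂ) (hζ : ζ ^ n = 1) :
    ‖1 - conj ω * w‖ ≤ ‖ζ - conj ω * w‖ := by
  have hω1 := norm_eq_one_of_pow_eq_one hω hn
  rw [norm_sub_conj_mul hω1, norm_sub_conj_mul hω1, one_mul]
  exact hmin (ζ * ω) (by rw [mul_pow, hζ, hω, one_mul])

lemma abs_im_le_re_of_forall_norm_one_sub_le {u : ℂ}
    (h : ∀ ζ : ℂ, ζ ^ 4 = 1 → ‖1 - u‖ ≤ ‖ζ - u‖) : |u.im| ≤ u.re := by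
  have hsq : ∀ ζ : ℂ, ζ ^ 4 = 1 → normSq (1 - u) ≤ normSq (ζ - u) := fun ζ hζ => by
    rw [← Complex.sq_norm, ← Complex.sq_norm]
    exact pow_le_pow_left₀ (norm_nonneg _) (h ζ hζ) 2
  have hI := hsq I (by norm_num [pow_succ])
  have hnegI := hsq (-I) (by norm_num [pow_succ])
  simp only [normSq_apply, sub_re, sub_im, one_re, one_im, neg_re, neg_im, I_re, I_im] at hI hnegI
  rw [abs_le]
  constructor <;> nlinarith

end Complex

lemma le_pi_div_eight_mul {c t r : ℝ} (hc : 1 / 2 ≤ c ^ 2) (hc0 : 0 ≤ c) (hc1 : c ≤ 1)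
    (ht0 : 0 ≤ t) (hr0 : 0 ≤ r) (ht : t ^ 2 = 2 - 2 * c) (hr : r ^ 2 = 16 * c ^ 2 * (1 - c ^ 2)) :
    t ≤ π / 8 * r := by
  have hc' : 0.7071 ≤ c := by nlinarith
  have hcube : 0.8535 ≤ c ^ 2 * (1 + c) := by nlinarith
  have key : 8 ≤ π ^ 2 * (c ^ 2 * (1 + c)) := by nlinarith [pi_gt_d2, pi_pos]
  have hsq : (π / 8 * r) ^ 2 - t ^ 2 = (1 - c) * (π ^ 2 * (c ^ 2 * (1 + c)) - 8) / 4 := by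
    rw [mul_pow, ht, hr]; ring
  refine (pow_le_pow_iff_left₀ ht0 (by positivity) two_ne_zero).mp ?_
  nlinarith [mul_nonneg (sub_nonneg.mpr hc1) (sub_nonneg.mpr key)]

lemma lt_pi_div_twelve_mul {c t r : ℝ} (hc : 1 / 2 ≤ c ^ 2) (hc0 : 0 ≤ c) (ht0 : 0 ≤ t)
    (ht : t ^ 2 = 2 - 2 * c) (hr : r ^ 2 = 16 * c ^ 2 * (1 - c ^ 2)) (hr0 : 0 < r) (hr1 : r < 1) :
    t < π / 12 * r := by
  have hpos : 0 < 1 - c ^ 2 :=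
    pos_of_mul_pos_right (by nlinarith [pow_pos hr0 2] : 0 < c ^ 2 * (1 - c ^ 2)) (sq_nonneg c)
  have hc1 : c < 1 := by nlinarith
  -- `c ^ 2` lies beyond the larger root `(2 + √3) / 4 ≈ 0.93301` of `16 s (1 - s) = 1`.
  have hs : 0.933 < c ^ 2 := by nlinarith
  have hc' : 0.9659 < c := by nlinarith
  have hcube : 1.834 < c ^ 2 * (1 + c) := by nlinarith
  have key : 18 < π ^ 2 * (c ^ 2 * (1 + c)) := by nlinarith [pi_gt_d2, pi_pos]
  have hsq : (π / 12 * r) ^ 2 - t ^ 2 = (1 - c) * (π ^ 2 * (c ^ 2 * (1 + c)) - 18) / 9 := by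
    rw [mul_pow, ht, hr]; ring
  refine (pow_lt_pow_iff_left₀ ht0 (by positivity) two_ne_zero).mp ?_
  nlinarith [mul_pos (sub_pos.mpr hc1) (sub_pos.mpr key)]

/-- Lemma 6.1: let `w` be a complex number of modulus 1, `z = 1 - w⁴`, and `ω` a fourth
root of unity at minimal distance from `w`.  If `1 ≤ |z| < 2` then `|ω - w| ≤ (π/8)|z|`,
and if `0 < |z| < 1` then `|ω - w| < (π/12)|z|`. -/
theorem fourth_root_of_unity_gap
    (w z ω : ℂ) (hw : ‖w‖ = 1) (hz : z = 1 - w^4)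
    (hω : ω^4 = 1)
    (hmin : ∀ ω' : ℂ, ω'^4 = 1 → ‖ω - w‖ ≤ ‖ω' - w‖) :
    (1 ≤ ‖z‖ → ‖z‖ < 2 →
      ‖ω - w‖ ≤ Real.pi/8 * ‖z‖) ∧
    (0 < ‖z‖ → ‖z‖ < 1 →
      ‖ω - w‖ < Real.pi/12 * ‖z‖) := by
  have hω1 : ‖ω‖ = 1 := Complex.norm_eq_one_of_pow_eq_one hω four_ne_zero
  set u := conj ω * w
  have hu : ‖u‖ = 1 := by rw [norm_mul, Complex.norm_conj, hω1, hw, one_mul]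
  have hu4 : u ^ 4 = w ^ 4 := by rw [mul_pow, ← map_pow, hω, map_one, one_mul]
  have hre : |u.im| ≤ u.re := Complex.abs_im_le_re_of_forall_norm_one_sub_le
    (Complex.forall_norm_one_sub_conj_mul_le four_ne_zero hω hmin)
  have hre_sq : 1 / 2 ≤ u.re ^ 2 := by
    nlinarith [sq_abs u.im, abs_nonneg u.im, Complex.re_sq_add_im_sq_of_norm_eq_one hu]
  have ht : ‖ω - w‖ ^ 2 = 2 - 2 * u.re := by
    rw [← one_mul ω, ← Complex.norm_sub_conj_mul hω1,
      Complex.sq_norm_one_sub_of_norm_eq_one hu]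
  have hr : ‖z‖ ^ 2 = 16 * u.re ^ 2 * (1 - u.re ^ 2) := by
    rw [hz, ← hu4, Complex.sq_norm_one_sub_pow_four_of_norm_eq_one hu]
  exact ⟨fun _ _ => le_pi_div_eight_mul hre_sq ((abs_nonneg _).trans hre)
      (u.re_le_norm.trans hu.le) (norm_nonneg _) (norm_nonneg _) ht hr,
    fun hr0 hr1 => lt_pi_div_twelve_mul hre_sq ((abs_nonneg _).trans hre) (norm_nonneg _)
      ht hr hr0 hr1⟩
end

section
/- Let F(x,y) be an irreducible binary quartic form with integer coefficients that splits in ℝ, with J_F = 0, I_F > 0 and A₃A₄ ≠ 0, and let h be a positive integer. Let ξ(x,y) = αx + βy and η(x,y) = ᾱx + β̄y be a pair of resolvent forms for F, i.e. complex conjugate linear forms satisfying ξ(x,y)⁴ − η(x,y)⁴ = 8i·√(3·I_F·|A₄|)·F(x,y) and ξ(x,y)·η(x,y) = ±(2A₁A₄x² + A₃²xy + 2A₃A₄y²)/√(12A₃²·√|A₄|) for all real x, y. Suppose (x₁,y₁) and (x₂,y₂) are integer pairs with gcd(x₁,y₁) = gcd(x₂,y₂) = 1, x₁y₂ − x₂y₁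 ≠ 0, |F(x₁,y₁)| ≤ h and |F(x₂,y₂)| ≤ h, both related to the same fourth root of unity ω (i.e. ω minimizes |ω′ − η(x_j,y_j)/ξ(x_j,y_j)| over fourth roots of unity ω′, for j = 1, 2), and that |ξ(x₁,y₁)| ≤ |ξ(x₂,y₂)|. Then |ξ(x₂,y₂)| ≥ |ξ(x₁,y₁)|³ / (π·√3·h·|A₄|^{1/4}). -/
open Polynomial Complex ComplexConjugate
open scoped Real

/-!
Write `ξⱼ = ξ(xⱼ, yⱼ)` and `ηⱼ = η(xⱼ, yⱼ) = conj ξⱼ`. The quotient `ηⱼ / ξⱼ` lies on the unit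
circle within angle `π/4` of `ω`, and there the chord to `ω` is at most `π/8` times `|z⁴ - 1|`;
hence `|ωξⱼ - ηⱼ| |ξⱼ|³ ≤ (π/8) |ξⱼ⁴ - ηⱼ⁴| = π √(3I|A₄|) |F(xⱼ, yⱼ)| ≤ π √(3I|A₄|) h`, where
`F(xⱼ, yⱼ) ≠ 0` by irreducibility. On the other side `ξ₁η₂ - η₁ξ₂ = (αβ̄ - ᾱβ)(x₁y₂ - x₂y₁)`, and
comparing discriminants in `ξη = ±(2A₁A₄x² + A₃²xy + 2A₃A₄y²)/D` gives, thanks to `J = 0`,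
`|αβ̄ - ᾱβ| = 2√I |A₄|^{1/4}`. Writing `ξ₁η₂ - η₁ξ₂ = ξ₂(ωξ₁ - η₁) - ξ₁(ωξ₂ - η₂)` and using
`|ξ₁| ≤ |ξ₂|` yields the gap.
-/

theorem abs_im_le_re_of_norm_one_sub_le {u : ℂ}
    (h : ∀ ζ : ℂ, ζ^4 = 1 → ‖1 - u‖ ≤ ‖ζ - u‖) : |u.im| ≤ u.re := by
  have key : ∀ ζ : ℂ, ζ^4 = 1 → normSq (1 - u) ≤ normSq (ζ - u) := fun ζ hζ => by
    rw [normSq_eq_norm_sq, normSq_eq_norm_sq]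
    exact pow_le_pow_left₀ (norm_nonneg _) (h ζ hζ) 2
  have hI := key I I_pow_four
  have hnegI := key (-I) (by rw [neg_pow, I_pow_four]; norm_num)
  simp only [normSq_apply, sub_re, sub_im, one_re, one_im, I_re, I_im, neg_re, neg_im] at hI hnegI
  rw [abs_le]
  constructor <;> nlinarith

/- `u⁴ - 1 = -(1 - u)(u + 1)(u² + 1)` with `|u + 1| = √(2 + 2 Re u)` and `|u² + 1| = 2 Re u`; since
`Re u ≥ 1/√2`, the product of the last two factors is at least `√(4 + 2√2) > 8/π`. -/
theorem norm_one_sub_le_of_abs_im_le_re {u : ℂ} (hu : ‖u‖ = 1) (h : |u.im| ≤ u.re) :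
    ‖1 - u‖ ≤ π / 8 * ‖u^4 - 1‖ := by
  set a := u.re
  have hnormSq : a^2 + u.im^2 = 1 := by
    have := normSq_eq_norm_sq u
    rw [hu, normSq_apply] at this; linarith
  have ha : 1 ≤ 2 * a^2 := by nlinarith [sq_abs u.im, abs_nonneg u.im]
  have ha₀ : 0 ≤ a := (abs_nonneg _).trans h
  have hplus : ‖u + 1‖^2 = 2 + 2 * a := by
    rw [← normSq_eq_norm_sq, normSq_apply]
    simp only [add_re, add_im, one_re, one_im]
    linear_combination hnormSq
  have hsq_plus : ‖u^2 + 1‖ = 2 * a := by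
    have hu1 : u * conj u = 1 := by rw [mul_conj, normSq_eq_norm_sq, hu]; norm_num
    rw [show u^2 + 1 = u * (u + conj u) by linear_combination -hu1, add_conj, norm_mul, hu,
      one_mul, norm_real, Real.norm_of_nonneg (by positivity)]
  have hconst : 8 ≤ π * ‖u + 1‖ * (2 * a) := by
    have hπ : 3.14 < π := Real.pi_gt_d2
    have ha' : 0.7071 ≤ a := by nlinarith
    have : 64 ≤ (π * ‖u + 1‖ * (2 * a))^2 := by
      have hπ2 : 9.8596 ≤ π^2 := by nlinarith
      have hpoly : 6.8284 ≤ (2 + 2 * a) * (2 * a)^2 := by nlinarith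
      rw [mul_pow, mul_pow, hplus, mul_assoc]
      nlinarith
    have ht : 0 ≤ π * ‖u + 1‖ * (2 * a) := by positivity
    nlinarith
  calc ‖1 - u‖ ≤ ‖1 - u‖ * (π * ‖u + 1‖ * (2 * a) / 8) :=
        le_mul_of_one_le_right (norm_nonneg _) (by linarith)
    _ = π / 8 * ‖u^4 - 1‖ := by
        rw [show u^4 - 1 = -((1 - u) * (u + 1) * (u^2 + 1)) by ring, norm_neg, norm_mul,
          norm_mul, hsq_plus]
        ring

theorem norm_sub_le_of_forall_pow_four_eq_one {z ω : ℂ} (hz : ‖z‖ = 1) (hω : ω^4 = 1)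
    (hmin : ∀ ω' : ℂ, ω'^4 = 1 → ‖ω - z‖ ≤ ‖ω' - z‖) :
    ‖ω - z‖ ≤ π / 8 * ‖z^4 - 1‖ := by
  have hω₁ : ‖ω‖ = 1 := norm_eq_one_of_pow_eq_one hω (by norm_num)
  have hω₀ : ω ≠ 0 := norm_ne_zero_iff.mp (by rw [hω₁]; exact one_ne_zero)
  set u := z / ω
  have hscale : ∀ ζ : ℂ, ‖ζ * ω - z‖ = ‖ζ - u‖ := fun ζ => by
    rw [show ζ * ω - z = (ζ - u) * ω by rw [sub_mul, div_mul_cancel₀ z hω₀], norm_mul, hω₁, mul_one]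
  have hu : ‖u‖ = 1 := by rw [norm_div, hz, hω₁, div_one]
  have hmin' : ∀ ζ : ℂ, ζ^4 = 1 → ‖1 - u‖ ≤ ‖ζ - u‖ := fun ζ hζ => by
    rw [← hscale, ← hscale, one_mul]
    exact hmin _ (by rw [mul_pow, hζ, hω, one_mul])
  have := norm_one_sub_le_of_abs_im_le_re hu (abs_im_le_re_of_norm_one_sub_le hmin')
  rwa [← hscale 1, one_mul, div_pow, hω, div_one] at this

theorem norm_mul_sub_mul_pow_three_le {ξ η ω : ℂ} (hξ : ξ ≠ 0) (hη : ‖η‖ = ‖ξ‖)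
    (hω : ω^4 = 1) (hmin : ∀ ω' : ℂ, ω'^4 = 1 → ‖ω - η / ξ‖ ≤ ‖ω' - η / ξ‖) :
    ‖ω * ξ - η‖ * ‖ξ‖^3 ≤ π / 8 * ‖ξ^4 - η^4‖ := by
  have hz : ‖η / ξ‖ = 1 := by rw [norm_div, hη, div_self (norm_ne_zero_iff.mpr hξ)]
  calc ‖ω * ξ - η‖ * ‖ξ‖^3 = ‖ξ‖^4 * ‖ω - η / ξ‖ := by
        rw [show ω * ξ - η = ξ * (ω - η / ξ) by field_simp, norm_mul]; ring
    _ ≤ ‖ξ‖^4 * (π / 8 * ‖(η / ξ)^4 - 1‖) := by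
        gcongr; exact norm_sub_le_of_forall_pow_four_eq_one hz hω hmin
    _ = π / 8 * ‖ξ^4 - η^4‖ := by
        rw [norm_sub_rev (ξ^4), show η^4 - ξ^4 = ξ^4 * ((η / ξ)^4 - 1) by field_simp, norm_mul,
          norm_pow]
        ring

theorem ne_zero_and_norm_mul_sub_mul_pow_three_le {ξ η ω : ℂ} {R f : ℝ} (hR : 0 < R)
    (hf : f ≠ 0) (hη : η = conj ξ) (hres : ξ^4 - η^4 = 8 * I * R * f) (hω : ω^4 = 1)
    (hmin : ∀ ω' : ℂ, ω'^4 = 1 → ‖ω - η / ξ‖ ≤ ‖ω' - η / ξ‖) :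
    ξ ≠ 0 ∧ ‖ω * ξ - η‖ * ‖ξ‖^3 ≤ π * R * |f| := by
  have hξ : ξ ≠ 0 := by
    rintro rfl
    simp [hη, hR.ne', hf] at hres
  refine ⟨hξ, (norm_mul_sub_mul_pow_three_le hξ (by rw [hη, norm_conj]) hω hmin).trans_eq ?_⟩
  rw [hres]
  simp only [norm_mul, norm_ofNat, norm_I, mul_one, norm_real, Real.norm_eq_abs, abs_of_pos hR]
  ring

theorem quartic_form_ne_zero_of_irreducible {a₀ a₁ a₂ a₃ a₄ : ℤ} (ha₀ : a₀ ≠ 0)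
    (hirr : Irreducible (C (a₀:ℚ) * X^4 + C (a₁:ℚ) * X^3 + C (a₂:ℚ) * X^2
        + C (a₃:ℚ) * X + C (a₄:ℚ) : ℚ[X]))
    {x y : ℤ} (hxy : x ≠ 0 ∨ y ≠ 0) :
    a₀*x^4 + a₁*x^3*y + a₂*x^2*y^2 + a₃*x*y^3 + a₄*y^4 ≠ 0 := by
  rcases eq_or_ne y 0 with rfl | hy
  · simpa [ha₀] using hxy
  intro h0
  have hdeg : (C (a₀:ℚ) * X^4 + C (a₁:ℚ) * X^3 + C (a₂:ℚ) * X^2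
      + C (a₃:ℚ) * X + C (a₄:ℚ)).natDegree = 4 := by compute_degree!
  refine hirr.not_isRoot_of_natDegree_ne_one (by omega) (x := (x:ℚ) / y) ?_
  have hyq : (y:ℚ) ≠ 0 := Int.cast_ne_zero.mpr hy
  have h0q : (a₀*x^4 + a₁*x^3*y + a₂*x^2*y^2 + a₃*x*y^3 + a₄*y^4 : ℚ) = 0 := by
    exact_mod_cast h0
  simp only [IsRoot, eval_add, eval_mul, eval_pow, eval_C, eval_X]
  field_simp
  linear_combination h0q

theorem ne_zero_and_norm_mul_sub_mul_pow_three_le_of_irreducible {a₀ a₁ a₂ a₃ a₄ : ℤ}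
    (ha₀ : a₀ ≠ 0) (hirr : Irreducible (C (a₀:ℚ) * X^4 + C (a₁:ℚ) * X^3 + C (a₂:ℚ) * X^2
        + C (a₃:ℚ) * X + C (a₄:ℚ) : ℚ[X]))
    {R : ℝ} (hR : 0 < R) {ξ η : ℝ → ℝ → ℂ} (hconj : ∀ x y : ℝ, η x y = conj (ξ x y))
    (hres : ∀ x y : ℝ, ξ x y ^ 4 - η x y ^ 4 = 8 * I * R * ((a₀:ℂ) * (x:ℂ)^4
      + (a₁:ℂ) * (x:ℂ)^3 * (y:ℂ) + (a₂:ℂ) * (x:ℂ)^2 * (y:ℂ)^2 + (a₃:ℂ) * (x:ℂ) * (y:ℂ)^3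
      + (a₄:ℂ) * (y:ℂ)^4))
    {ω : ℂ} (hω : ω^4 = 1) {x y : ℤ} (hxy : Int.gcd x y = 1)
    (hmin : ∀ ω' : ℂ, ω'^4 = 1 → ‖ω - η x y / ξ x y‖ ≤ ‖ω' - η x y / ξ x y‖) :
    ξ x y ≠ 0 ∧ ‖ω * ξ x y - η x y‖ * ‖ξ x y‖^3
      ≤ π * R * |((a₀*x^4 + a₁*x^3*y + a₂*x^2*y^2 + a₃*x*y^3 + a₄*y^4 : ℤ) : ℝ)| := by
  have hf := quartic_form_ne_zero_of_irreducible ha₀ hirr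
    (by by_contra! h0; simp [h0.1, h0.2] at hxy : x ≠ 0 ∨ y ≠ 0)
  refine ne_zero_and_norm_mul_sub_mul_pow_three_le hR (by exact_mod_cast hf) (hconj x y) ?_ hω hmin
  rw [hres]
  push_cast
  ring

theorem hessian_syzygy {R : Type*} [CommRing R] (a₀ a₁ a₂ a₃ a₄ I J A₁ A₃ A₄ : R)
    (hI : I = a₂^2 - 3*a₁*a₃ + 12*a₀*a₄)
    (hJ : J = 2*a₂^3 - 9*a₁*a₂*a₃ + 27*a₁^2*a₄ - 72*a₀*a₂*a₄ + 27*a₀*a₃^2)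
    (hA₁ : A₁ = 12*(6*a₀*a₃ - a₁*a₂))
    (hA₃ : A₃ = 12*(6*a₁*a₄ - a₂*a₃))
    (hA₄ : A₄ = 3*(8*a₂*a₄ - 3*a₃^2)) :
    A₃^3 - 16*A₁*A₄^2 = 48*I*A₃*A₄ - 3456*(a₃^3 - 2*a₂*a₃*a₄ - 4*a₁*a₄^2)*J := by
  subst hI hJ hA₁ hA₃ hA₄; ring

theorem sq_mul_sub_mul_eq_discrim {α β γ δ q₀ q₁ q₂ : ℂ}
    (h : ∀ x y : ℝ, (α*x + β*y) * (γ*x + δ*y) = q₀*x^2 + q₁*x*y + q₂*y^2) :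
    (α*δ - β*γ)^2 = discrim q₀ q₁ q₂ := by
  have h₁ := h 1 0
  have h₂ := h 0 1
  have h₃ := h 1 1
  simp only [ofReal_one, ofReal_zero, mul_one, mul_zero, add_zero, zero_add, one_pow,
    zero_pow two_ne_zero] at h₁ h₂ h₃
  rw [discrim]
  linear_combination (α*δ + β*γ + q₁) * (h₃ - h₁ - h₂) - 4*β*δ*h₁ - 4*q₀*h₂

theorem sq_eq_neg_sq_norm_of_conj_eq_neg {w : ℂ} (hw : conj w = -w) :
    w^2 = -((‖w‖^2 : ℝ) : ℂ) := by
  rw [← normSq_eq_norm_sq, ← mul_conj, hw]; ring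

theorem sq_resolvent_det_eq (a₀ a₁ a₂ a₃ a₄ I J A₁ A₃ A₄ : ℤ)
    (hI : I = a₂^2 - 3*a₁*a₃ + 12*a₀*a₄)
    (hJdef : J = 2*a₂^3 - 9*a₁*a₂*a₃ + 27*a₁^2*a₄ - 72*a₀*a₂*a₄ + 27*a₀*a₃^2)
    (hA₁ : A₁ = 12*(6*a₀*a₃ - a₁*a₂)) (hA₃ : A₃ = 12*(6*a₁*a₄ - a₂*a₃))
    (hA₄ : A₄ = 3*(8*a₂*a₄ - 3*a₃^2)) (hJ : J = 0) {α β ε : ℂ} {D : ℝ}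
    (hε : ε = 1 ∨ ε = -1)
    (hprod : ∀ x y : ℝ, (α*x + β*y) * (conj α * x + conj β * y)
      = ε * (((2*A₁*A₄ : ℤ):ℂ)*x^2 + ((A₃^2 : ℤ):ℂ)*x*y + ((2*A₃*A₄ : ℤ):ℂ)*y^2) / D) :
    (α * conj β - conj α * β)^2 = 48 * I * A₃^2 * A₄ / (D:ℂ)^2 := by
  have hdisc := sq_mul_sub_mul_eq_discrim (q₀ := ε * (2*A₁*A₄ : ℤ) / D)
    (q₁ := ε * (A₃^2 : ℤ) / D) (q₂ := ε * (2*A₃*A₄ : ℤ) / D) fun x y => (hprod x y).trans (by ring)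
  have hsyz : (A₃:ℂ)^3 - 16*A₁*A₄^2 = 48*I*A₃*A₄ := by
    have := hessian_syzygy a₀ a₁ a₂ a₃ a₄ I J A₁ A₃ A₄ hI hJdef hA₁ hA₃ hA₄
    rw [hJ, mul_zero, sub_zero] at this
    exact_mod_cast this
  have hε2 : ε^2 = 1 := by rcases hε with rfl | rfl <;> norm_num
  rw [discrim] at hdisc
  push_cast at hdisc
  linear_combination hdisc + (A₃ / (D:ℂ)^2) * hsyz
    + ((A₃:ℂ)^4 - 16*A₁*A₃*A₄^2) / (D:ℂ)^2 * hε2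

theorem sq_rpow_one_div_four {x : ℝ} (hx : 0 ≤ x) : (x ^ ((1:ℝ)/4))^2 = Real.sqrt x := by
  rw [← Real.rpow_natCast, ← Real.rpow_mul hx, Real.sqrt_eq_rpow]
  norm_num

theorem norm_resolvent_det_eq (a₀ a₁ a₂ a₃ a₄ I J A₁ A₃ A₄ : ℤ)
    (hI : I = a₂^2 - 3*a₁*a₃ + 12*a₀*a₄)
    (hJdef : J = 2*a₂^3 - 9*a₁*a₂*a₃ + 27*a₁^2*a₄ - 72*a₀*a₂*a₄ + 27*a₀*a₃^2)
    (hA₁ : A₁ = 12*(6*a₀*a₃ - a₁*a₂)) (hA₃ : A₃ = 12*(6*a₁*a₄ - a₂*a₃))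
    (hA₄ : A₄ = 3*(8*a₂*a₄ - 3*a₃^2)) (hJ : J = 0) (hIpos : 0 < I) (hA34 : A₃ * A₄ ≠ 0)
    {α β ε : ℂ} (hε : ε = 1 ∨ ε = -1)
    (hprod : ∀ x y : ℝ, (α*x + β*y) * (conj α * x + conj β * y)
      = ε * (((2*A₁*A₄ : ℤ):ℂ)*x^2 + ((A₃^2 : ℤ):ℂ)*x*y + ((2*A₃*A₄ : ℤ):ℂ)*y^2)
        / ((Real.sqrt (12*(A₃:ℝ)^2*Real.sqrt |(A₄:ℝ)|) : ℝ) : ℂ)) :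
    ‖α * conj β - conj α * β‖ = 2 * Real.sqrt I * |(A₄:ℝ)| ^ ((1:ℝ)/4) := by
  set w := α * conj β - conj α * β
  obtain ⟨hA₃0, hA₄0⟩ := mul_ne_zero_iff.mp hA34
  have hA₃r : (A₃:ℝ) ≠ 0 := by exact_mod_cast hA₃0
  have hA₄abs : 0 < |(A₄:ℝ)| := by positivity
  have hI0 : (0:ℝ) < I := by exact_mod_cast hIpos
  have hroot : 0 < Real.sqrt |(A₄:ℝ)| := Real.sqrt_pos.mpr hA₄abs
  have hD : 0 < 12 * (A₃:ℝ)^2 * Real.sqrt |(A₄:ℝ)| := by positivity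
  -- `w` is purely imaginary, so `w² = -‖w‖²`; this is what forces `A₄ < 0` below.
  have hreal : -‖w‖^2 * (12 * A₃^2 * Real.sqrt |(A₄:ℝ)|) = 48 * I * A₃^2 * A₄ := by
    have hw := sq_resolvent_det_eq a₀ a₁ a₂ a₃ a₄ I J A₁ A₃ A₄ hI hJdef hA₁ hA₃ hA₄ hJ hε hprod
    rw [sq_eq_neg_sq_norm_of_conj_eq_neg (by simp),
      eq_div_iff (by exact_mod_cast (pow_pos (Real.sqrt_pos.mpr hD) 2).ne')] at hw
    rw [← Real.sq_sqrt hD.le]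
    exact_mod_cast hw
  have hK : ‖w‖^2 * Real.sqrt |(A₄:ℝ)| = -4 * I * A₄ := by
    refine mul_left_cancel₀ (by positivity : 12 * (A₃:ℝ)^2 ≠ 0) ?_
    linear_combination -hreal
  have hA₄neg : (A₄:ℝ) < 0 := by
    have hA₄r : (A₄:ℝ) ≠ 0 := by exact_mod_cast hA₄0
    by_contra! h
    nlinarith [lt_of_le_of_ne h hA₄r.symm, mul_nonneg (sq_nonneg ‖w‖) hroot.le]
  have hsq : ‖w‖^2 = 4 * I * Real.sqrt |(A₄:ℝ)| := by
    have : Real.sqrt |(A₄:ℝ)| * Real.sqrt |(A₄:ℝ)| = -A₄ := by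
      rw [Real.mul_self_sqrt (abs_nonneg _), abs_of_neg hA₄neg]
    refine mul_right_cancel₀ hroot.ne' ?_
    linear_combination hK - 4 * I * this
  rw [← pow_left_inj₀ (norm_nonneg _) (by positivity) two_ne_zero, hsq, mul_pow, mul_pow,
    Real.sq_sqrt hI0.le, sq_rpow_one_div_four (abs_nonneg _)]
  ring

theorem norm_mul_sub_mul_le (ξ₁ η₁ ξ₂ η₂ ω : ℂ) :
    ‖ξ₁ * η₂ - η₁ * ξ₂‖ ≤ ‖ξ₁‖ * ‖ω * ξ₂ - η₂‖ + ‖ξ₂‖ * ‖ω * ξ₁ - η₁‖ :=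
  calc ‖ξ₁ * η₂ - η₁ * ξ₂‖ = ‖ξ₂ * (ω * ξ₁ - η₁) - ξ₁ * (ω * ξ₂ - η₂)‖ := by ring_nf
    _ ≤ _ := (norm_sub_le _ _).trans_eq (by rw [norm_mul, norm_mul, add_comm])

theorem norm_mul_conj_sub_le_of_one_le_abs {α β ω : ℂ} {ξ η : ℝ → ℝ → ℂ}
    (hξ : ∀ x y : ℝ, ξ x y = α * x + β * y) (hη : ∀ x y : ℝ, η x y = conj α * x + conj β * y)
    {x₁ y₁ x₂ y₂ : ℝ} (hdet : 1 ≤ |x₁ * y₂ - x₂ * y₁|) :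
    ‖α * conj β - conj α * β‖
      ≤ ‖ξ x₁ y₁‖ * ‖ω * ξ x₂ y₂ - η x₂ y₂‖ + ‖ξ x₂ y₂‖ * ‖ω * ξ x₁ y₁ - η x₁ y₁‖ :=
  calc ‖α * conj β - conj α * β‖ ≤ ‖α * conj β - conj α * β‖ * |x₁ * y₂ - x₂ * y₁| :=
        le_mul_of_one_le_right (norm_nonneg _) hdet
    _ = ‖ξ x₁ y₁ * η x₂ y₂ - η x₁ y₁ * ξ x₂ y₂‖ := by
        rw [← Real.norm_eq_abs, ← norm_real, ← norm_mul, hξ, hξ, hη, hη]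
        push_cast; ring_nf
    _ ≤ _ := norm_mul_sub_mul_le _ _ _ _ ω

theorem mul_pow_three_le_two_mul_mul {p q u₁ u₂ B K : ℝ} (hp : 0 ≤ p) (hpq : p ≤ q)
    (hq : 0 < q) (hu₁ : 0 ≤ u₁) (h₁ : u₁ * p^3 ≤ B) (h₂ : u₂ * q^3 ≤ B)
    (hK : K ≤ p * u₂ + q * u₁) : K * p^3 ≤ 2 * B * q := by
  have hB : 0 ≤ B := (mul_nonneg hu₁ (pow_nonneg hp 3)).trans h₁
  have h4 : p^4 ≤ q^4 := pow_le_pow_left₀ hp hpq 4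
  have : K * p^3 * q^3 ≤ 2 * B * q * q^3 := calc
    K * p^3 * q^3 ≤ (p * u₂ + q * u₁) * (p^3 * q^3) := by
        rw [mul_assoc]; exact mul_le_mul_of_nonneg_right hK (by positivity)
    _ = p^4 * (u₂ * q^3) + q^4 * (u₁ * p^3) := by ring
    _ ≤ p^4 * B + q^4 * B := by gcongr
    _ ≤ 2 * B * q * q^3 := by nlinarith
  exact le_of_mul_le_mul_right this (by positivity)

theorem gap_principle_general
    (a₀ a₁ a₂ a₃ a₄ I J A₁ A₃ A₄ h : ℤ)
    (hI : I = a₂^2 - 3*a₁*a₃ + 12*a₀*a₄)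
    (hJdef : J = 2*a₂^3 - 9*a₁*a₂*a₃ + 27*a₁^2*a₄ - 72*a₀*a₂*a₄ + 27*a₀*a₃^2)
    (hA₁ : A₁ = 12*(6*a₀*a₃ - a₁*a₂))
    (hA₃ : A₃ = 12*(6*a₁*a₄ - a₂*a₃))
    (hA₄ : A₄ = 3*(8*a₂*a₄ - 3*a₃^2))
    (F : ℤ → ℤ → ℤ)
    (hF : ∀ x y : ℤ, F x y =
      a₀*x^4 + a₁*x^3*y + a₂*x^2*y^2 + a₃*x*y^3 + a₄*y^4)
    (ha₀ : a₀ ≠ 0)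
    (hirr : Irreducible (C (a₀:ℚ) * X^4 + C (a₁:ℚ) * X^3 + C (a₂:ℚ) * X^2
        + C (a₃:ℚ) * X + C (a₄:ℚ) : ℚ[X]))
    (hJ : J = 0) (hIpos : 0 < I) (hA34 : A₃ * A₄ ≠ 0)
    -- the pair of resolvent forms ξ(x,y) = αx + βy, η(x,y) = ᾱx + β̄y
    (α β : ℂ) (ξ η : ℝ → ℝ → ℂ)
    (hξ : ∀ x y : ℝ, ξ x y = α*(x:ℂ) + β*(y:ℂ))
    (hη : ∀ x y : ℝ, η x y = (starRingEnd ℂ) α*(x:ℂ) + (starRingEnd ℂ) β*(y:ℂ))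
    (hres1 : ∀ x y : ℝ,
      (ξ x y)^4 - (η x y)^4
        = 8 * Complex.I * (Real.sqrt (3*(I:ℝ)*|(A₄:ℝ)|) : ℂ)
          * ((a₀:ℂ)*(x:ℂ)^4 + (a₁:ℂ)*(x:ℂ)^3*(y:ℂ) + (a₂:ℂ)*(x:ℂ)^2*(y:ℂ)^2
            + (a₃:ℂ)*(x:ℂ)*(y:ℂ)^3 + (a₄:ℂ)*(y:ℂ)^4))
    (hres2 : ∃ ε : ℂ, (ε = 1 ∨ ε = -1) ∧ ∀ x y : ℝ,
      ξ x y * η x y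
        = ε * (((2*A₁*A₄ : ℤ):ℂ)*(x:ℂ)^2 + ((A₃^2 : ℤ):ℂ)*(x:ℂ)*(y:ℂ)
              + ((2*A₃*A₄ : ℤ):ℂ)*(y:ℂ)^2)
            / ((Real.sqrt (12*(A₃:ℝ)^2*Real.sqrt |(A₄:ℝ)|) : ℝ) : ℂ))
    -- the two solutions
    (x₁ y₁ x₂ y₂ : ℤ)
    (hg1 : Int.gcd x₁ y₁ = 1) (hg2 : Int.gcd x₂ y₂ = 1)
    (hdist : x₁*y₂ - x₂*y₁ ≠ 0)
    (hF1 : |F x₁ y₁| ≤ h) (hF2 : |F x₂ y₂| ≤ h)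
    -- both related to the same fourth root of unity ω
    (ω : ℂ) (hω : ω^4 = 1)
    (hrel1 : ∀ ω' : ℂ, ω'^4 = 1 →
      ‖ω - η (x₁:ℝ) (y₁:ℝ) / ξ (x₁:ℝ) (y₁:ℝ)‖
        ≤ ‖ω' - η (x₁:ℝ) (y₁:ℝ) / ξ (x₁:ℝ) (y₁:ℝ)‖)
    (hrel2 : ∀ ω' : ℂ, ω'^4 = 1 →
      ‖ω - η (x₂:ℝ) (y₂:ℝ) / ξ (x₂:ℝ) (y₂:ℝ)‖
        ≤ ‖ω' - η (x₂:ℝ) (y₂:ℝ) / ξ (x₂:ℝ) (y₂:ℝ)‖)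
    (hle : ‖ξ (x₁:ℝ) (y₁:ℝ)‖ ≤ ‖ξ (x₂:ℝ) (y₂:ℝ)‖) :
    ‖ξ (x₂:ℝ) (y₂:ℝ)‖
      ≥ ‖ξ (x₁:ℝ) (y₁:ℝ)‖^3
        / (Real.pi * Real.sqrt 3 * (h:ℝ) * |(A₄:ℝ)| ^ ((1:ℝ)/4)) := by
  have hconj : ∀ x y : ℝ, η x y = conj (ξ x y) := fun x y => by simp [hξ, hη]
  set R := Real.sqrt (3 * (I:ℝ) * |(A₄:ℝ)|) with hR_def
  have hI0 : (0:ℝ) < I := by exact_mod_cast hIpos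
  have hA₄0 : (A₄:ℝ) ≠ 0 := by exact_mod_cast right_ne_zero_of_mul hA34
  have hR : 0 < R := Real.sqrt_pos.mpr (by positivity)
  obtain ⟨hξ₁, hb₁⟩ := ne_zero_and_norm_mul_sub_mul_pow_three_le_of_irreducible ha₀ hirr hR
    hconj hres1 hω hg1 hrel1
  obtain ⟨-, hb₂⟩ := ne_zero_and_norm_mul_sub_mul_pow_three_le_of_irreducible ha₀ hirr hR
    hconj hres1 hω hg2 hrel2
  rw [hF] at hF1 hF2
  obtain ⟨ε, hε, hprod⟩ := hres2
  have hw := norm_resolvent_det_eq a₀ a₁ a₂ a₃ a₄ I J A₁ A₃ A₄ hI hJdef hA₁ hA₃ hA₄ hJ hIpos hA34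
    hε fun x y => by rw [← hξ, ← hη]; exact hprod x y
  have hw_le := norm_mul_conj_sub_le_of_one_le_abs (ω := ω) hξ hη
    (x₁ := x₁) (y₁ := y₁) (x₂ := x₂) (y₂ := y₂) (by exact_mod_cast Int.one_le_abs hdist)
  have hgap := mul_pow_three_le_two_mul_mul (B := π * R * h) (norm_nonneg _) hle
    ((norm_pos_iff.mpr hξ₁).trans_le hle) (norm_nonneg _)
    (hb₁.trans (mul_le_mul_of_nonneg_left (by exact_mod_cast hF1) (by positivity)))
    (hb₂.trans (mul_le_mul_of_nonneg_left (by exact_mod_cast hF2) (by positivity))) hw_le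
  have hR_eq : R = Real.sqrt 3 * Real.sqrt I * (|(A₄:ℝ)| ^ ((1:ℝ)/4))^2 := by
    rw [hR_def, sq_rpow_one_div_four (abs_nonneg _), Real.sqrt_mul (by positivity),
      Real.sqrt_mul (by norm_num)]
  have hh : (0:ℝ) ≤ h := by exact_mod_cast (abs_nonneg _).trans hF1
  rw [hw] at hgap
  refine div_le_of_le_mul₀ (by positivity) (norm_nonneg _)
    (le_of_mul_le_mul_left (hgap.trans_eq ?_) (by positivity))
  rw [hR_eq]
  ring

/-- The gap principle: if `(x₁,y₁)` and `(x₂,y₂)` are distinct coprime integer solutions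
of `|F(x,y)| ≤ h` related to the same fourth root of unity `ω`, with
`|ξ(x₁,y₁)| ≤ |ξ(x₂,y₂)|`, then `|ξ(x₂,y₂)| ≥ |ξ(x₁,y₁)|³/(π√3·h·|A₄|^{1/4})`. -/
theorem gap_principle
    (a₀ a₁ a₂ a₃ a₄ I J A₁ A₃ A₄ h : ℤ)
    (hI : I = a₂^2 - 3*a₁*a₃ + 12*a₀*a₄)
    (hJdef : J = 2*a₂^3 - 9*a₁*a₂*a₃ + 27*a₁^2*a₄ - 72*a₀*a₂*a₄ + 27*a₀*a₃^2)
    (hA₁ : A₁ = 12*(6*a₀*a₃ - a₁*a₂))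
    (hA₃ : A₃ = 12*(6*a₁*a₄ - a₂*a₃))
    (hA₄ : A₄ = 3*(8*a₂*a₄ - 3*a₃^2))
    (F : ℤ → ℤ → ℤ)
    (hF : ∀ x y : ℤ, F x y =
      a₀*x^4 + a₁*x^3*y + a₂*x^2*y^2 + a₃*x*y^3 + a₄*y^4)
    (ha₀ : a₀ ≠ 0)
    (hirr : Irreducible (C (a₀:ℚ) * X^4 + C (a₁:ℚ) * X^3 + C (a₂:ℚ) * X^2
        + C (a₃:ℚ) * X + C (a₄:ℚ) : ℚ[X]))
    (hsplit : ∃ r₁ r₂ r₃ r₄ : ℝ, ∀ x : ℝ,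
      (a₀:ℝ)*x^4 + (a₁:ℝ)*x^3 + (a₂:ℝ)*x^2 + (a₃:ℝ)*x + (a₄:ℝ)
        = (a₀:ℝ)*(x - r₁)*(x - r₂)*(x - r₃)*(x - r₄))
    (hJ : J = 0) (hIpos : 0 < I) (hA34 : A₃ * A₄ ≠ 0) (hh : 0 < h)
    -- the pair of resolvent forms ξ(x,y) = αx + βy, η(x,y) = ᾱx + β̄y
    (α β : ℂ) (ξ η : ℝ → ℝ → ℂ)
    (hξ : ∀ x y : ℝ, ξ x y = α*(x:ℂ) + β*(y:ℂ))
    (hη : ∀ x y : ℝ, η x y = (starRingEnd ℂ) α*(x:ℂ) + (starRingEnd ℂ) β*(y:ℂ))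
    (hres1 : ∀ x y : ℝ,
      (ξ x y)^4 - (η x y)^4
        = 8 * Complex.I * (Real.sqrt (3*(I:ℝ)*|(A₄:ℝ)|) : ℂ)
          * ((a₀:ℂ)*(x:ℂ)^4 + (a₁:ℂ)*(x:ℂ)^3*(y:ℂ) + (a₂:ℂ)*(x:ℂ)^2*(y:ℂ)^2
            + (a₃:ℂ)*(x:ℂ)*(y:ℂ)^3 + (a₄:ℂ)*(y:ℂ)^4))
    (hres2 : ∃ ε : ℂ, (ε = 1 ∨ ε = -1) ∧ ∀ x y : ℝ,
      ξ x y * η x y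
        = ε * (((2*A₁*A₄ : ℤ):ℂ)*(x:ℂ)^2 + ((A₃^2 : ℤ):ℂ)*(x:ℂ)*(y:ℂ)
              + ((2*A₃*A₄ : ℤ):ℂ)*(y:ℂ)^2)
            / ((Real.sqrt (12*(A₃:ℝ)^2*Real.sqrt |(A₄:ℝ)|) : ℝ) : ℂ))
    -- the two solutions
    (x₁ y₁ x₂ y₂ : ℤ)
    (hg1 : Int.gcd x₁ y₁ = 1) (hg2 : Int.gcd x₂ y₂ = 1)
    (hdist : x₁*y₂ - x₂*y₁ ≠ 0)
    (hF1 : |F x₁ y₁| ≤ h) (hF2 : |F x₂ y₂| ≤ h)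
    -- both related to the same fourth root of unity ω
    (ω : ℂ) (hω : ω^4 = 1)
    (hrel1 : ∀ ω' : ℂ, ω'^4 = 1 →
      ‖ω - η (x₁:ℝ) (y₁:ℝ) / ξ (x₁:ℝ) (y₁:ℝ)‖
        ≤ ‖ω' - η (x₁:ℝ) (y₁:ℝ) / ξ (x₁:ℝ) (y₁:ℝ)‖)
    (hrel2 : ∀ ω' : ℂ, ω'^4 = 1 →
      ‖ω - η (x₂:ℝ) (y₂:ℝ) / ξ (x₂:ℝ) (y₂:ℝ)‖
        ≤ ‖ω' - η (x₂:ℝ) (y₂:ℝ) / ξ (x₂:ℝ) (y₂:ℝ)‖)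
    (hle : ‖ξ (x₁:ℝ) (y₁:ℝ)‖ ≤ ‖ξ (x₂:ℝ) (y₂:ℝ)‖) :
    ‖ξ (x₂:ℝ) (y₂:ℝ)‖
      ≥ ‖ξ (x₁:ℝ) (y₁:ℝ)‖^3
        / (Real.pi * Real.sqrt 3 * (h:ℝ) * |(A₄:ℝ)| ^ ((1:ℝ)/4)) :=
  gap_principle_general a₀ a₁ a₂ a₃ a₄ I J A₁ A₃ A₄ h hI hJdef hA₁ hA₃ hA₄ F hF ha₀ hirr hJ hIpos
    hA34 α β ξ η hξ hη hres1 hres2 x₁ y₁ x₂ y₂ hg1 hg2 hdist hF1 hF2 ω hω hrel1 hrel2 hle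
end

section
/- Let r ≥ 1 be an integer and g ∈ {0,1}, and define A_{r,g}(z) = Σ_{m=0}^{r} C(r−g+1/4, m)·C(2r−g−m, r−g)·(−z)^m, where C(α, m) = α(α−1)⋯(α−m+1)/m! is the generalized binomial coefficient and C(n, k) the ordinary one. Then for all complex numbers z with |1 − z| ≤ 1, one has |A_{r,g}(z)| ≤ C(2r−g, r). -/
open Finset

/-- The generalized binomial coefficient `C(α, m) = α(α-1)⋯(α-m+1)/m!`. -/
noncomputable def gchoose (α : ℝ) (m : ℕ) : ℝ :=
  (∏ i ∈ Finset.range m, (α - i)) / (m.factorial : ℝ)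

/-- The Padé approximation polynomial `A_{r,g}(z)`. -/
noncomputable def padeA (r g : ℕ) (z : ℂ) : ℂ :=
  ∑ m ∈ Finset.range (r + 1),
    ((gchoose ((r:ℝ) - (g:ℝ) + 1/4) m * ((2*r - g - m).choose (r - g) : ℝ) : ℝ) : ℂ)
      * (-z)^m

/-!
In powers of `w = 1 - z`,
`A_{r,g}(z) = ∑_{j ≤ r} C(r - g + 1/4, j) C(r - 1/4, r - j) w^j`:
expanding `w^j` binomially, the coefficient of `(-z)^m` collapses by trinomial revision and
Chu–Vandermonde. For `g ≤ 1` these coefficients are nonnegative, and by Chu–Vandermonde again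
they sum to `C(2r - g, r)`, so the triangle inequality on `|w| ≤ 1` gives the bound.
-/

theorem gchoose_eq_ringChoose (α : ℝ) (m : ℕ) : gchoose α m = Ring.choose α m := by
  rw [Ring.choose_eq_smul, smul_eq_mul, ← Polynomial.aeval_eq_smeval, Polynomial.aeval_def,
    ← Polynomial.eval_map, descPochhammer_map, descPochhammer_eval_eq_prod_range, gchoose,
    div_eq_inv_mul]

theorem gchoose_natCast (n k : ℕ) : gchoose n k = n.choose k := by
  rw [gchoose_eq_ringChoose, Ring.choose_natCast]

theorem sum_range_gchoose_mul_gchoose (x y : ℝ) (n : ℕ) :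
    ∑ i ∈ range (n + 1), gchoose x i * gchoose y (n - i) = gchoose (x + y) n := by
  simp only [gchoose_eq_ringChoose]
  rw [Ring.add_choose_eq n (Commute.all x y), Nat.sum_antidiagonal_eq_sum_range_succ_mk]

theorem choose_mul_gchoose (α : ℝ) {m j : ℕ} (h : m ≤ j) :
    j.choose m * gchoose α j = gchoose α m * gchoose (α - m) (j - m) := by
  simp only [gchoose_eq_ringChoose, ← nsmul_eq_mul]
  exact Ring.choose_smul_choose α h

theorem gchoose_nonneg {α : ℝ} {m : ℕ} (h : (m : ℝ) ≤ α + 1) : 0 ≤ gchoose α m := by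
  refine div_nonneg (prod_nonneg fun i hi => ?_) (Nat.cast_nonneg _)
  have : (i : ℝ) + 1 ≤ m := by exact_mod_cast mem_range.1 hi
  linarith

theorem sum_range_gchoose_mul_gchoose_mul_choose (α β : ℝ) {m n : ℕ} (h : m ≤ n) :
    ∑ j ∈ range (n + 1), gchoose α j * gchoose β (n - j) * j.choose m =
      gchoose α m * gchoose (α + β - m) (n - m) := by
  obtain ⟨k, rfl⟩ := Nat.exists_eq_add_of_le h
  have hsmall : ∀ j ∈ range m, gchoose α j * gchoose β (m + k - j) * j.choose m = 0 :=
    fun j hj => by simp [Nat.choose_eq_zero_of_lt (mem_range.1 hj)]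
  rw [add_assoc, sum_range_add, sum_eq_zero hsmall, zero_add, Nat.add_sub_cancel_left,
    add_sub_right_comm, ← sum_range_gchoose_mul_gchoose, mul_sum]
  refine sum_congr rfl fun i _ => ?_
  rw [Nat.add_sub_add_left, mul_right_comm, mul_comm _ ((m + i).choose m : ℝ),
    choose_mul_gchoose α (Nat.le_add_right m i), Nat.add_sub_cancel_left, mul_assoc]

theorem sum_range_gchoose_mul_gchoose_mul_one_sub_pow (α β : ℝ) (n : ℕ) (z : ℂ) :
    ∑ j ∈ range (n + 1), ((gchoose α j * gchoose β (n - j) : ℝ) : ℂ) * (1 - z) ^ j =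
      ∑ m ∈ range (n + 1), ((gchoose α m * gchoose (α + β - m) (n - m) : ℝ) : ℂ) * (-z) ^ m := by
  have hexpand : ∀ j ∈ range (n + 1),
      (1 - z) ^ j = ∑ m ∈ range (n + 1), (j.choose m : ℂ) * (-z) ^ m := fun j hj => by
    rw [sub_eq_neg_add, add_pow]
    refine sum_subset (range_subset_range.2 (mem_range.1 hj)) (fun m _ hm => ?_) |>.trans
      (sum_congr rfl fun m _ => by ring)
    simp [Nat.choose_eq_zero_of_lt (not_lt.1 (mem_range.not.1 hm))]
  calc _ = ∑ j ∈ range (n + 1), ∑ m ∈ range (n + 1),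
        ((gchoose α j * gchoose β (n - j) : ℝ) : ℂ) * ((j.choose m : ℂ) * (-z) ^ m) :=
        sum_congr rfl fun j hj => by rw [hexpand j hj, mul_sum]
    _ = _ := by
      rw [sum_comm]
      refine sum_congr rfl fun m hm => ?_
      rw [← sum_range_gchoose_mul_gchoose_mul_choose α β (mem_range_succ_iff.1 hm),
        Complex.ofReal_sum, sum_mul]
      refine sum_congr rfl fun j _ => ?_
      push_cast
      ring

theorem norm_sum_ofReal_mul_pow_le_sum {s : Finset ℕ} {c : ℕ → ℝ} (hc : ∀ j ∈ s, 0 ≤ c j)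
    {w : ℂ} (hw : ‖w‖ ≤ 1) : ‖∑ j ∈ s, (c j : ℂ) * w ^ j‖ ≤ ∑ j ∈ s, c j := by
  refine (norm_sum_le _ _).trans (sum_le_sum fun j hj => ?_)
  rw [norm_mul, norm_pow, Complex.norm_real, Real.norm_of_nonneg (hc j hj)]
  exact mul_le_of_le_one_right (hc j hj) (pow_le_one₀ (norm_nonneg w) hw)

theorem padeA_eq_sum_one_sub_pow {r g : ℕ} (hgr : g ≤ r) (z : ℂ) :
    padeA r g z = ∑ j ∈ range (r + 1),
      ((gchoose ((r : ℝ) - g + 1/4) j * gchoose ((r : ℝ) - 1/4) (r - j) : ℝ) : ℂ) *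
        (1 - z) ^ j := by
  rw [sum_range_gchoose_mul_gchoose_mul_one_sub_pow, padeA]
  refine sum_congr rfl fun m hm => ?_
  have hm : m ≤ r := mem_range_succ_iff.1 hm
  have hcast : (r : ℝ) - g + 1/4 + (r - 1/4) - m = (2 * r - g - m : ℕ) := by
    rw [Nat.cast_sub (by omega), Nat.cast_sub (by omega)]
    push_cast
    ring
  rw [hcast, gchoose_natCast, Nat.choose_symm_of_eq_add (a := r - g) (b := r - m) (by omega)]

/-- Lemma 2.2 (ii): for `|1 - z| ≤ 1`, one has `|A_{r,g}(z)| ≤ C(2r-g, r)`. -/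
theorem padeA_bound
    (r g : ℕ) (hr : 1 ≤ r) (hg : g = 0 ∨ g = 1)
    (z : ℂ) (hz : ‖1 - z‖ ≤ 1) :
    ‖padeA r g z‖ ≤ ((2*r - g).choose r : ℝ) := by
  have hg1 : (g : ℝ) ≤ 1 := by rcases hg with rfl | rfl <;> norm_num
  have hcoeff_nonneg : ∀ j ∈ range (r + 1),
      0 ≤ gchoose ((r : ℝ) - g + 1/4) j * gchoose ((r : ℝ) - 1/4) (r - j) := fun j hj => by
    have hjr : j ≤ r := mem_range_succ_iff.1 hj
    have hjR : (j : ℝ) ≤ r := by exact_mod_cast hjr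
    refine mul_nonneg (gchoose_nonneg (by linarith)) (gchoose_nonneg ?_)
    rw [Nat.cast_sub hjr]
    linarith
  have hsum : (r : ℝ) - g + 1/4 + (r - 1/4) = (2 * r - g : ℕ) := by
    rw [Nat.cast_sub (by omega)]
    push_cast
    ring
  rw [padeA_eq_sum_one_sub_pow (by omega)]
  calc _ ≤ ∑ j ∈ range (r + 1),
          gchoose ((r : ℝ) - g + 1/4) j * gchoose ((r : ℝ) - 1/4) (r - j) :=
        norm_sum_ofReal_mul_pow_le_sum hcoeff_nonneg hz
    _ = ((2*r - g).choose r : ℝ) := by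
      rw [sum_range_gchoose_mul_gchoose, hsum, gchoose_natCast]
end

section
/- Let r ≥ 1 be an integer and h ∈ {0,1}, and define A_{r,g}(z) = Σ_{m=0}^{r} C(r−g+1/4, m)·C(2r−g−m, r−g)·(−z)^m and B_{r,g}(z) = Σ_{m=0}^{r−g} C(r−1/4, m)·C(2r−g−m, r)·(−z)^m for g ∈ {0,1}, where C(α, m) = α(α−1)⋯(α−m+1)/m! is the generalized binomial coefficient and C(n, k) the ordinary one. Then for all complex numbers z ≠ 0: A_{r,0}(z)·B_{r+h,1}(z) ≠ A_{r+h,1}(z)·B_{r,0}(z). -/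
/-!
The pairs `(A_{r,0}, A_{r,1})` and `(B_{r,0}, B_{r,1})` satisfy the same two contiguous
recurrences in `r`; coefficientwise these are Pascal's rule and the absorption identities for
ordinary and generalized binomial coefficients. Consequently the determinants
`D(r, s) = A_{r,0} B_{s,1} - A_{s,1} B_{r,0}` obey
`(r + 1) D(r, r + 1) = -(4r + 1)/4 · z · D(r, r)` and
`4(r + 1) D(r + 1, r + 1) = -(4r + 3) · z · D(r, r + 1)`,
and since `D(1, 1) = -3z²/16`, induction on `r` shows that neither vanishes when `z ≠ 0`.
-/

open Finset

/-- The Padé approximation polynomial `B_{r,g}(z)`. -/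
noncomputable def padeB (r g : ℕ) (z : ℂ) : ℂ :=
  ∑ m ∈ Finset.range (r - g + 1),
    ((gchoose ((r:ℝ) - 1/4) m * ((2*r - g - m).choose r : ℝ) : ℝ) : ℂ)
      * (-z)^m

lemma gchoose_zero (α : ℝ) : gchoose α 0 = 1 := by simp [gchoose]

lemma succ_mul_gchoose_succ (α : ℝ) (j : ℕ) :
    ((j:ℝ) + 1) * gchoose α (j + 1) = (α - j) * gchoose α j := by
  simp only [gchoose, prod_range_succ, Nat.factorial_succ, Nat.cast_mul]
  field_simp
  push_cast
  ring

lemma succ_mul_gchoose_add_one_succ (α : ℝ) (j : ℕ) :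
    ((j:ℝ) + 1) * gchoose (α + 1) (j + 1) = (α + 1) * gchoose α j := by
  simp only [gchoose, prod_range_succ', Nat.factorial_succ, Nat.cast_mul]
  field_simp
  push_cast
  ring_nf

lemma cast_choose_succ_succ (n k : ℕ) :
    ((n + 1).choose (k + 1) : ℝ) = (n.choose k : ℝ) + (n.choose (k + 1) : ℝ) := by
  exact_mod_cast Nat.choose_succ_succ n k

lemma succ_mul_cast_choose_succ (n k : ℕ) :
    ((k:ℝ) + 1) * (n.choose (k + 1) : ℝ) = ((n:ℝ) - k) * (n.choose k : ℝ) := by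
  rcases le_or_gt k n with hkn | hnk
  · have h := Nat.choose_succ_right_eq n k
    rw [← Nat.cast_sub hkn]
    exact_mod_cast (mul_comm _ _).trans (h.trans (mul_comm _ _))
  · rw [Nat.choose_eq_zero_of_lt hnk, Nat.choose_eq_zero_of_lt (by omega)]
    simp

lemma mul_cast_choose_succ_succ (c : ℝ) (n k : ℕ) :
    c * ((n + 1).choose (k + 1) : ℝ)
      = (c + k + 1) * (n.choose (k + 1) : ℝ) + (c + k - n) * (n.choose k : ℝ) := by
  linear_combination c * cast_choose_succ_succ n k - succ_mul_cast_choose_succ n k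

lemma succ_mul_cast_choose (n k : ℕ) :
    ((n:ℝ) + 1) * (n.choose k : ℝ) = ((k:ℝ) + 1) * ((n + 1).choose (k + 1) : ℝ) := by
  rw [mul_comm ((k:ℝ) + 1)]
  exact_mod_cast Nat.add_one_mul_choose_eq n k

noncomputable def coeffSum (c : ℕ → ℝ) (n : ℕ) (z : ℂ) : ℂ :=
  ∑ m ∈ range n, (c m : ℂ) * (-z) ^ m

lemma coeffSum_const_mul (a : ℝ) (c : ℕ → ℝ) (n : ℕ) (z : ℂ) :
    coeffSum (fun m => a * c m) n z = a * coeffSum c n z := by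
  simp only [coeffSum, mul_sum, Complex.ofReal_mul, mul_assoc]

lemma coeffSum_succ_of_eq_zero {c : ℕ → ℝ} {n : ℕ} (hc : c n = 0) (z : ℂ) :
    coeffSum c (n + 1) z = coeffSum c n z := by
  simp [coeffSum, sum_range_succ, hc]

lemma coeffSum_succ_eq_add_neg_mul {f g h : ℕ → ℝ} {n : ℕ} (h0 : f 0 = g 0)
    (hsucc : ∀ j < n, f (j + 1) = g (j + 1) + h j) (z : ℂ) :
    coeffSum f (n + 1) z = coeffSum g (n + 1) z + -z * coeffSum h n z := by
  have hterm : ∀ j ∈ range n, (f (j + 1) : ℂ) * (-z) ^ (j + 1)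
      = (g (j + 1) : ℂ) * (-z) ^ (j + 1) + -z * ((h j : ℂ) * (-z) ^ j) := by
    intro j hj
    rw [hsucc j (mem_range.mp hj)]
    push_cast
    ring
  simp only [coeffSum, sum_range_succ', sum_congr rfl hterm, sum_add_distrib, mul_sum, h0]
  ring

noncomputable def padeACoeff (r g m : ℕ) : ℝ :=
  gchoose ((r:ℝ) - (g:ℝ) + 1/4) m * ((2*r - g - m).choose (r - g) : ℝ)

noncomputable def padeBCoeff (r g m : ℕ) : ℝ :=
  gchoose ((r:ℝ) - 1/4) m * ((2*r - g - m).choose r : ℝ)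

lemma padeA_eq_coeffSum (r g : ℕ) (z : ℂ) :
    padeA r g z = coeffSum (padeACoeff r g) (r + 1) z := rfl

lemma padeB_eq_coeffSum (r g : ℕ) (z : ℂ) :
    padeB r g z = coeffSum (padeBCoeff r g) (r - g + 1) z := rfl

lemma padeACoeff_succ_one_succ (r j : ℕ) (hr : 1 ≤ r) (hj : j ≤ r) :
    ((r:ℝ) + 1) * padeACoeff (r + 1) 1 (j + 1)
      = (2 * r + 1) * padeACoeff r 0 (j + 1) + (4 * r + 1) / 4 * padeACoeff r 1 j := by
  obtain ⟨k, rfl⟩ : ∃ k, r = k + 1 := ⟨r - 1, by omega⟩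
  obtain ⟨n, hn⟩ : ∃ n, n + j = 2 * k + 1 := ⟨2 * k + 1 - j, by omega⟩
  simp only [padeACoeff]
  rw [show 2 * (k + 1 + 1) - 1 - (j + 1) = n + 1 by omega, show 2 * (k + 1) - 0 - (j + 1) = n by omega,
    show 2 * (k + 1) - 1 - j = n by omega, show k + 1 + 1 - 1 = k + 1 by omega,
    show k + 1 - 0 = k + 1 by omega, show k + 1 - 1 = k by omega]
  push_cast
  rw [show (k:ℝ) + 1 + 1 - 1 + 1/4 = k + 1/4 + 1 by ring,
    show (k:ℝ) + 1 - 0 + 1/4 = k + 1/4 + 1 by ring, show (k:ℝ) + 1 - 1 + 1/4 = k + 1/4 by ring]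
  set G := gchoose ((k:ℝ) + 1/4 + 1) (j + 1)
  have hn' : (n:ℝ) + j = 2 * k + 1 := by exact_mod_cast hn
  linear_combination G * mul_cast_choose_succ_succ (k + 2) n k
    + (n.choose k : ℝ) * succ_mul_gchoose_add_one_succ ((k:ℝ) + 1/4) j
    - G * (n.choose k : ℝ) * hn'

lemma padeBCoeff_succ_one_succ (r j : ℕ) (hj : j < r) :
    ((r:ℝ) + 1) * padeBCoeff (r + 1) 1 (j + 1)
      = (2 * r + 1) * padeBCoeff r 0 (j + 1) + (4 * r + 1) / 4 * padeBCoeff r 1 j := by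
  obtain ⟨n, hn⟩ : ∃ n, n + j + 1 = 2 * r := ⟨2 * r - 1 - j, by omega⟩
  simp only [padeBCoeff]
  rw [show 2 * (r + 1) - 1 - (j + 1) = n + 1 by omega, show 2 * r - 0 - (j + 1) = n by omega,
    show 2 * r - 1 - j = n by omega]
  push_cast
  rw [show (r:ℝ) + 1 - 1/4 = r - 1/4 + 1 by ring]
  have hn' : (n:ℝ) + j + 1 = 2 * r := by exact_mod_cast hn
  have hj1 : (j:ℝ) + 1 ≠ 0 := by positivity
  -- after multiplying by `j + 1`, every generalized binomial is a multiple of `gchoose (r - 1/4) j`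
  apply mul_left_cancel₀ hj1
  set G := gchoose ((r:ℝ) - 1/4) j
  linear_combination ((r:ℝ) + 1) * ((n + 1).choose (r + 1) : ℝ) * succ_mul_gchoose_add_one_succ ((r:ℝ) - 1/4) j
    - (2 * r + 1) * (n.choose r : ℝ) * succ_mul_gchoose_succ ((r:ℝ) - 1/4) j
    - (r - 1/4 + 1) * G * succ_mul_cast_choose n r
    + (r - 1/4 + 1) * G * (n.choose r : ℝ) * hn'

lemma padeACoeff_succ_zero_succ (r j : ℕ) (hj : j ≤ r) :
    4 * ((r:ℝ) + 1) * padeACoeff (r + 1) 0 (j + 1)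
      = 8 * ((r:ℝ) + 1) * padeACoeff (r + 1) 1 (j + 1) + (4 * r + 3) * padeACoeff r 0 j := by
  obtain ⟨n, hn⟩ : ∃ n, n + j = 2 * r := ⟨2 * r - j, by omega⟩
  simp only [padeACoeff]
  rw [show 2 * (r + 1) - 0 - (j + 1) = n + 1 by omega, show 2 * (r + 1) - 1 - (j + 1) = n by omega,
    show 2 * r - 0 - j = n by omega, show r + 1 - 0 = r + 1 by omega, show r + 1 - 1 = r by omega,
    show r - 0 = r by omega]
  push_cast
  rw [show (r:ℝ) + 1 - 0 + 1/4 = r + 1/4 + 1 by ring, show (r:ℝ) + 1 - 1 + 1/4 = r + 1/4 by ring,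
    show (r:ℝ) - 0 + 1/4 = r + 1/4 by ring]
  have hn' : (n:ℝ) + j = 2 * r := by exact_mod_cast hn
  have hj1 : (j:ℝ) + 1 ≠ 0 := by positivity
  apply mul_left_cancel₀ hj1
  set G := gchoose ((r:ℝ) + 1/4) j
  linear_combination 4 * ((r:ℝ) + 1) * ((n + 1).choose (r + 1) : ℝ) * succ_mul_gchoose_add_one_succ ((r:ℝ) + 1/4) j
    - 8 * ((r:ℝ) + 1) * (n.choose r : ℝ) * succ_mul_gchoose_succ ((r:ℝ) + 1/4) j
    - 4 * (r + 1/4 + 1) * G * succ_mul_cast_choose n r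
    + 4 * (r + 1/4 + 1) * G * (n.choose r : ℝ) * hn'

lemma padeBCoeff_succ_zero_succ (r j : ℕ) (hj : j ≤ r) :
    4 * ((r:ℝ) + 1) * padeBCoeff (r + 1) 0 (j + 1)
      = 8 * ((r:ℝ) + 1) * padeBCoeff (r + 1) 1 (j + 1) + (4 * r + 3) * padeBCoeff r 0 j := by
  obtain ⟨n, hn⟩ : ∃ n, n + j = 2 * r := ⟨2 * r - j, by omega⟩
  simp only [padeBCoeff]
  rw [show 2 * (r + 1) - 0 - (j + 1) = n + 1 by omega, show 2 * (r + 1) - 1 - (j + 1) = n by omega,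
    show 2 * r - 0 - j = n by omega]
  push_cast
  rw [show (r:ℝ) + 1 - 1/4 = r - 1/4 + 1 by ring]
  have hn' : (n:ℝ) + j = 2 * r := by exact_mod_cast hn
  set G₁ := gchoose ((r:ℝ) - 1/4 + 1) (j + 1)
  linear_combination 4 * G₁ * mul_cast_choose_succ_succ (r + 1) n r
    + 4 * (n.choose r : ℝ) * succ_mul_gchoose_add_one_succ ((r:ℝ) - 1/4) j
    - 4 * G₁ * (n.choose r : ℝ) * hn'

lemma padeA_succ_one (r : ℕ) (hr : 1 ≤ r) (z : ℂ) :
    ((r:ℂ) + 1) * padeA (r + 1) 1 z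
      = (2 * r + 1) * padeA r 0 z - (4 * r + 1) / 4 * z * padeA r 1 z := by
  have h0 : ((r:ℝ) + 1) * padeACoeff (r + 1) 1 0 = (2 * r + 1) * padeACoeff r 0 0 := by
    obtain ⟨k, rfl⟩ : ∃ k, r = k + 1 := ⟨r - 1, by omega⟩
    simp only [padeACoeff, gchoose_zero, one_mul]
    rw [show 2 * (k + 1 + 1) - 1 - 0 = 2 * k + 2 + 1 by omega, show 2 * (k + 1) - 0 - 0 = 2 * k + 2 by omega,
      show k + 1 + 1 - 1 = k + 1 by omega, show k + 1 - 0 = k + 1 by omega]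
    have h := mul_cast_choose_succ_succ (k + 2) (2 * k + 2) k
    push_cast at h ⊢
    linear_combination h
  have htail : padeACoeff r 0 (r + 1) = 0 := by
    simp [padeACoeff, Nat.choose_eq_zero_of_lt (show 2 * r - (r + 1) < r by omega)]
  have key := coeffSum_succ_eq_add_neg_mul (f := fun m => ((r:ℝ) + 1) * padeACoeff (r + 1) 1 m)
    (g := fun m => (2 * r + 1) * padeACoeff r 0 m) (h := fun m => (4 * r + 1) / 4 * padeACoeff r 1 m) (n := r + 1)
    h0 (fun j hj => padeACoeff_succ_one_succ r j hr (by omega)) z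
  rw [coeffSum_const_mul, coeffSum_const_mul, coeffSum_const_mul, coeffSum_succ_of_eq_zero htail] at key
  rw [padeA_eq_coeffSum, padeA_eq_coeffSum, padeA_eq_coeffSum]
  push_cast at key
  linear_combination key

lemma padeB_succ_one (r : ℕ) (hr : 1 ≤ r) (z : ℂ) :
    ((r:ℂ) + 1) * padeB (r + 1) 1 z
      = (2 * r + 1) * padeB r 0 z - (4 * r + 1) / 4 * z * padeB r 1 z := by
  have h0 : ((r:ℝ) + 1) * padeBCoeff (r + 1) 1 0 = (2 * r + 1) * padeBCoeff r 0 0 := by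
    simp only [padeBCoeff, gchoose_zero, one_mul]
    rw [show 2 * (r + 1) - 1 - 0 = 2 * r + 1 by omega, show 2 * r - 0 - 0 = 2 * r by omega]
    have h := succ_mul_cast_choose (2 * r) r
    push_cast at h ⊢
    linear_combination -h
  have key := coeffSum_succ_eq_add_neg_mul (f := fun m => ((r:ℝ) + 1) * padeBCoeff (r + 1) 1 m)
    (g := fun m => (2 * r + 1) * padeBCoeff r 0 m) (h := fun m => (4 * r + 1) / 4 * padeBCoeff r 1 m) (n := r)
    h0 (fun j hj => padeBCoeff_succ_one_succ r j hj) z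
  rw [coeffSum_const_mul, coeffSum_const_mul, coeffSum_const_mul] at key
  rw [padeB_eq_coeffSum, padeB_eq_coeffSum, padeB_eq_coeffSum, Nat.add_sub_cancel, Nat.sub_zero,
    Nat.sub_add_cancel hr]
  push_cast at key
  linear_combination key

lemma padeA_succ_zero (r : ℕ) (z : ℂ) :
    4 * ((r:ℂ) + 1) * padeA (r + 1) 0 z
      = 8 * ((r:ℂ) + 1) * padeA (r + 1) 1 z - (4 * r + 3) * z * padeA r 0 z := by
  have h0 : 4 * ((r:ℝ) + 1) * padeACoeff (r + 1) 0 0 = 8 * ((r:ℝ) + 1) * padeACoeff (r + 1) 1 0 := by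
    simp only [padeACoeff, gchoose_zero, one_mul]
    rw [show 2 * (r + 1) - 0 - 0 = 2 * r + 1 + 1 by omega, show 2 * (r + 1) - 1 - 0 = 2 * r + 1 by omega,
      show r + 1 - 0 = r + 1 by omega, show r + 1 - 1 = r by omega]
    have h := succ_mul_cast_choose (2 * r + 1) r
    push_cast at h ⊢
    linear_combination -4 * h
  have key := coeffSum_succ_eq_add_neg_mul (f := fun m => 4 * ((r:ℝ) + 1) * padeACoeff (r + 1) 0 m)
    (g := fun m => 8 * ((r:ℝ) + 1) * padeACoeff (r + 1) 1 m) (h := fun m => (4 * r + 3) * padeACoeff r 0 m)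
    (n := r + 1) h0 (fun j hj => padeACoeff_succ_zero_succ r j (by omega)) z
  rw [coeffSum_const_mul, coeffSum_const_mul, coeffSum_const_mul] at key
  rw [padeA_eq_coeffSum, padeA_eq_coeffSum, padeA_eq_coeffSum]
  push_cast at key
  linear_combination key

lemma padeB_succ_zero (r : ℕ) (z : ℂ) :
    4 * ((r:ℂ) + 1) * padeB (r + 1) 0 z
      = 8 * ((r:ℂ) + 1) * padeB (r + 1) 1 z - (4 * r + 3) * z * padeB r 0 z := by
  have h0 : 4 * ((r:ℝ) + 1) * padeBCoeff (r + 1) 0 0 = 8 * ((r:ℝ) + 1) * padeBCoeff (r + 1) 1 0 := by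
    simp only [padeBCoeff, gchoose_zero, one_mul]
    rw [show 2 * (r + 1) - 0 - 0 = 2 * r + 1 + 1 by omega, show 2 * (r + 1) - 1 - 0 = 2 * r + 1 by omega]
    have h := mul_cast_choose_succ_succ (r + 1) (2 * r + 1) r
    push_cast at h ⊢
    linear_combination 4 * h
  have htail : padeBCoeff (r + 1) 1 (r + 1) = 0 := by
    simp [padeBCoeff, Nat.choose_eq_zero_of_lt (show 2 * (r + 1) - 1 - (r + 1) < r + 1 by omega)]
  have key := coeffSum_succ_eq_add_neg_mul (f := fun m => 4 * ((r:ℝ) + 1) * padeBCoeff (r + 1) 0 m)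
    (g := fun m => 8 * ((r:ℝ) + 1) * padeBCoeff (r + 1) 1 m) (h := fun m => (4 * r + 3) * padeBCoeff r 0 m)
    (n := r + 1) h0 (fun j hj => padeBCoeff_succ_zero_succ r j (by omega)) z
  rw [coeffSum_const_mul, coeffSum_const_mul, coeffSum_const_mul, coeffSum_succ_of_eq_zero htail] at key
  rw [padeB_eq_coeffSum, padeB_eq_coeffSum, padeB_eq_coeffSum, Nat.add_sub_cancel, Nat.sub_zero,
    Nat.sub_zero]
  push_cast at key
  linear_combination key

noncomputable def padeDet (r s : ℕ) (z : ℂ) : ℂ :=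
  padeA r 0 z * padeB s 1 z - padeA s 1 z * padeB r 0 z

lemma padeDet_succ_right (r : ℕ) (hr : 1 ≤ r) (z : ℂ) :
    ((r:ℂ) + 1) * padeDet r (r + 1) z = -((4 * r + 1) / 4) * z * padeDet r r z := by
  unfold padeDet
  linear_combination padeA r 0 z * padeB_succ_one r hr z - padeB r 0 z * padeA_succ_one r hr z

lemma padeDet_succ_succ (r : ℕ) (z : ℂ) :
    4 * ((r:ℂ) + 1) * padeDet (r + 1) (r + 1) z = -(4 * r + 3) * z * padeDet r (r + 1) z := by
  unfold padeDet
  linear_combination padeB (r + 1) 1 z * padeA_succ_zero r z - padeA (r + 1) 1 z * padeB_succ_zero r z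

lemma padeDet_one_one (z : ℂ) : padeDet 1 1 z = -(3 / 16) * z ^ 2 := by
  simp only [padeDet, padeA, padeB, gchoose]
  norm_num [sum_range_succ, prod_range_succ]
  ring

lemma padeDet_succ_right_ne_zero {r : ℕ} (hr : 1 ≤ r) {z : ℂ} (hz : z ≠ 0)
    (h : padeDet r r z ≠ 0) : padeDet r (r + 1) z ≠ 0 := by
  have hc : -((4 * (r:ℂ) + 1) / 4) ≠ 0 := neg_ne_zero.mpr (div_ne_zero (by norm_cast) (by norm_num))
  intro h₁
  have hrec := padeDet_succ_right r hr z
  rw [h₁, mul_zero] at hrec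
  exact mul_ne_zero (mul_ne_zero hc hz) h hrec.symm

lemma padeDet_self_ne_zero {r : ℕ} (hr : 1 ≤ r) {z : ℂ} (hz : z ≠ 0) : padeDet r r z ≠ 0 := by
  induction r, hr using Nat.le_induction with
  | base => simp [padeDet_one_one, hz]
  | succ r hr ih =>
    have hc : -(4 * (r:ℂ) + 3) ≠ 0 := neg_ne_zero.mpr (by norm_cast)
    intro h
    have hrec := padeDet_succ_succ r z
    rw [h, mul_zero] at hrec
    exact mul_ne_zero (mul_ne_zero hc hz) (padeDet_succ_right_ne_zero hr hz ih) hrec.symm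

/-- Lemma 2.2 (iii): for `z ≠ 0` and `h ∈ {0,1}`,
`A_{r,0}(z)·B_{r+h,1}(z) ≠ A_{r+h,1}(z)·B_{r,0}(z)`. -/
theorem pade_nonvanishing
    (r h : ℕ) (hr : 1 ≤ r) (hh : h = 0 ∨ h = 1)
    (z : ℂ) (hz : z ≠ 0) :
    padeA r 0 z * padeB (r + h) 1 z ≠ padeA (r + h) 1 z * padeB r 0 z := by
  rw [← sub_ne_zero]
  rcases hh with rfl | rfl
  · exact padeDet_self_ne_zero hr hz
  · exact padeDet_succ_right_ne_zero hr hz (padeDet_self_ne_zero hr hz)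
end

section
/- For every integer r ≥ 1 and every g ∈ {0,1}, one has C(r−g+1/4, r+1−g)·C(r−1/4, r) < 1/(√2·π·r), where C(α, m) = α(α−1)⋯(α−m+1)/m! is the generalized binomial coefficient. -/
/-!
Write `P_a(r) = C(r-1+a, r)·C(r-a, r)` for `0 < a < 1`. Since
`C(r+1/4, r+1) = C(r-3/4, r)·(r+1/4)/(r+1)`, both cases `g = 0, 1` reduce to
`P_{1/4}(r) < 1/(√2·π·r)`.

In terms of `Γ`, `P_a(r) = Γ(r+a)Γ(r+1-a) / (Γ(a)Γ(1-a)Γ(r+1)²)`, and log-convexity of `Γ` on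
`[r, r+1]` gives `r·P_a(r) ≤ 1/(Γ(a)Γ(1-a)) = sin(πa)/π` (reflection formula; `1/(√2·π)` at
`a = 1/4`). The inequality is strict because `r·P_a(r)` is strictly increasing: consecutive
ratios are `(r² + r + a(1-a))/(r² + r) > 1`.
-/

open Finset

open Real

lemma prod_range_add_natCast_eq_Gamma_div {c : ℝ} (hc : 0 < c) (n : ℕ) :
    ∏ k ∈ range n, (c + k) = Gamma (c + n) / Gamma c := by
  induction n with
  | zero => simp [(Gamma_pos_of_pos hc).ne']
  | succ n ih =>
    rw [prod_range_succ, ih, Nat.cast_succ, ← add_assoc, Gamma_add_one (by positivity)]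
    ring

lemma gchoose_natCast_sub_one_add (c : ℝ) (m : ℕ) :
    gchoose (m - 1 + c) m = (∏ k ∈ range m, (c + k)) / m.factorial := by
  unfold gchoose
  rw [← prod_range_reflect]
  congr 1
  refine prod_congr rfl fun i hi => ?_
  rw [Nat.cast_sub (by grind), Nat.cast_sub (by grind)]
  push_cast
  ring

lemma gchoose_add_one_succ (α : ℝ) (m : ℕ) :
    gchoose (α + 1) (m + 1) = gchoose α m * (α + 1) / (m + 1) := by
  unfold gchoose
  rw [prod_range_succ', Nat.factorial_succ]
  push_cast
  simp only [add_sub_add_right_eq_sub, sub_zero]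
  field_simp

lemma gchoose_natCast_sub_one_add_eq_Gamma {c : ℝ} (hc : 0 < c) (m : ℕ) :
    gchoose (m - 1 + c) m = Gamma (c + m) / (Gamma c * Gamma (m + 1)) := by
  rw [gchoose_natCast_sub_one_add, prod_range_add_natCast_eq_Gamma_div hc, Gamma_nat_eq_factorial,
    div_div]

lemma Gamma_add_mul_Gamma_add_one_sub_le {x a : ℝ} (hx : 0 < x) (ha₀ : 0 < a) (ha₁ : a < 1) :
    Gamma (x + a) * Gamma (x + 1 - a) ≤ Gamma x * Gamma (x + 1) := by
  have hx₁ : 0 < x + 1 := by linarith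
  have h₁ := Gamma_mul_add_mul_le_rpow_Gamma_mul_rpow_Gamma hx hx₁ (sub_pos.2 ha₁) ha₀
    (sub_add_cancel 1 a)
  have h₂ := Gamma_mul_add_mul_le_rpow_Gamma_mul_rpow_Gamma hx hx₁ ha₀ (sub_pos.2 ha₁)
    (add_sub_cancel a 1)
  rw [show (1 - a) * x + a * (x + 1) = x + a by ring] at h₁
  rw [show a * x + (1 - a) * (x + 1) = x + 1 - a by ring] at h₂
  calc Gamma (x + a) * Gamma (x + 1 - a)
      ≤ (Gamma x ^ (1 - a) * Gamma (x + 1) ^ a) * (Gamma x ^ a * Gamma (x + 1) ^ (1 - a)) :=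
        mul_le_mul h₁ h₂ (Gamma_pos_of_pos (by linarith)).le (by positivity)
    _ = Gamma x * Gamma (x + 1) := by
        rw [mul_mul_mul_comm, ← rpow_add (Gamma_pos_of_pos hx),
          ← rpow_add (Gamma_pos_of_pos hx₁)]
        norm_num

noncomputable def gchooseReflProd (a : ℝ) (r : ℕ) : ℝ :=
  gchoose (r - 1 + a) r * gchoose (r - a) r

lemma gchooseReflProd_eq_Gamma {a : ℝ} (ha₀ : 0 < a) (ha₁ : a < 1) (r : ℕ) :
    gchooseReflProd a r =
      Gamma (r + a) * Gamma (r + 1 - a) / (Gamma a * Gamma (1 - a) * Gamma (r + 1) ^ 2) := by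
  rw [gchooseReflProd, show (r : ℝ) - a = r - 1 + (1 - a) by ring,
    gchoose_natCast_sub_one_add_eq_Gamma ha₀,
    gchoose_natCast_sub_one_add_eq_Gamma (sub_pos.2 ha₁)]
  field_simp
  ring_nf

lemma gchooseReflProd_pos {a : ℝ} (ha₀ : 0 < a) (ha₁ : a < 1) (r : ℕ) :
    0 < gchooseReflProd a r := by
  have : 0 < 1 - a := sub_pos.2 ha₁
  rw [gchooseReflProd_eq_Gamma ha₀ ha₁, add_sub_assoc]
  positivity

lemma gchooseReflProd_succ (a : ℝ) (r : ℕ) :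
    gchooseReflProd a (r + 1) = gchooseReflProd a r * ((r + a) * (r + 1 - a) / (r + 1) ^ 2) := by
  have h₁ : ((r + 1 : ℕ) : ℝ) - 1 + a = (r - 1 + a) + 1 := by push_cast; ring
  have h₂ : ((r + 1 : ℕ) : ℝ) - a = (r - a) + 1 := by push_cast; ring
  rw [gchooseReflProd, gchooseReflProd, h₁, h₂, gchoose_add_one_succ, gchoose_add_one_succ]
  field_simp
  ring

lemma strictMono_natCast_mul_gchooseReflProd {a : ℝ} (ha₀ : 0 < a) (ha₁ : a < 1) :
    StrictMono fun r : ℕ => r * gchooseReflProd a r := by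
  refine strictMono_nat_of_lt_succ fun r => ?_
  have hP := gchooseReflProd_pos ha₀ ha₁ r
  have hr : (0 : ℝ) < r + 1 := by positivity
  calc r * gchooseReflProd a r
      < gchooseReflProd a r * ((r + a) * (r + 1 - a) / (r + 1)) := by
        rw [mul_comm, mul_lt_mul_iff_right₀ hP, lt_div_iff₀ hr]
        nlinarith
    _ = ((r + 1 : ℕ) : ℝ) * gchooseReflProd a (r + 1) := by
        rw [gchooseReflProd_succ]
        push_cast
        field_simp

lemma natCast_mul_gchooseReflProd_le {a : ℝ} (ha₀ : 0 < a) (ha₁ : a < 1) {r : ℕ}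
    (hr : 0 < r) :
    r * gchooseReflProd a r ≤ sin (π * a) / π := by
  have hr' : (0 : ℝ) < r := Nat.cast_pos.2 hr
  have key : r * (Gamma (r + a) * Gamma (r + 1 - a)) ≤ Gamma (r + 1) ^ 2 :=
    calc r * (Gamma (r + a) * Gamma (r + 1 - a))
        ≤ r * (Gamma r * Gamma (r + 1)) :=
          mul_le_mul_of_nonneg_left (Gamma_add_mul_Gamma_add_one_sub_le hr' ha₀ ha₁) hr'.le
      _ = Gamma (r + 1) ^ 2 := by rw [Gamma_add_one hr'.ne']; ring
  rw [gchooseReflProd_eq_Gamma ha₀ ha₁,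
    show sin (π * a) / π = (Gamma a * Gamma (1 - a))⁻¹ by
      rw [Gamma_mul_Gamma_one_sub, inv_div]]
  calc r * (Gamma (r + a) * Gamma (r + 1 - a) / (Gamma a * Gamma (1 - a) * Gamma (r + 1) ^ 2))
      = r * (Gamma (r + a) * Gamma (r + 1 - a)) / Gamma (r + 1) ^ 2 *
          (Gamma a * Gamma (1 - a))⁻¹ := by
        ring
    _ ≤ 1 * (Gamma a * Gamma (1 - a))⁻¹ :=
        mul_le_mul_of_nonneg_right ((div_le_one (by positivity)).2 key) (by positivity)
    _ = (Gamma a * Gamma (1 - a))⁻¹ := one_mul _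

lemma gchooseReflProd_lt {a : ℝ} (ha₀ : 0 < a) (ha₁ : a < 1) {r : ℕ} (hr : 0 < r) :
    gchooseReflProd a r < sin (π * a) / (π * r) := by
  have h := (strictMono_natCast_mul_gchooseReflProd ha₀ ha₁ r.lt_succ_self).trans_le
    (natCast_mul_gchooseReflProd_le ha₀ ha₁ r.succ_pos)
  rw [← div_div, lt_div_iff₀ (Nat.cast_pos.2 hr), mul_comm]
  exact h

/-- For every `r ≥ 1` and `g ∈ {0,1}`,
`C(r-g+1/4, r+1-g)·C(r-1/4, r) < 1/(√2·π·r)`. -/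
theorem gchoose_product_bound
    (r g : ℕ) (hr : 1 ≤ r) (hg : g = 0 ∨ g = 1) :
    gchoose ((r:ℝ) - (g:ℝ) + 1/4) (r + 1 - g) * gchoose ((r:ℝ) - 1/4) r
      < 1 / (Real.sqrt 2 * Real.pi * (r:ℝ)) := by
  have hbound := gchooseReflProd_lt (a := 1/4) (by norm_num) (by norm_num) hr
  have hsin : sin (π * (1/4)) / (π * r) = 1 / (√2 * π * r) := by
    rw [show π * (1/4) = π / 4 by ring, sin_pi_div_four]
    field_simp
    norm_num
  rw [hsin] at hbound
  rcases hg with rfl | rfl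
  · have h : gchoose (r - (0 : ℕ) + 1/4) (r + 1 - 0) * gchoose (r - 1/4) r
        = gchooseReflProd (1/4) r * ((r + 1/4) / (r + 1)) := by
      rw [gchooseReflProd, Nat.cast_zero, sub_zero, Nat.sub_zero,
        show (r : ℝ) + 1/4 = (r - 1 + 1/4) + 1 by ring, gchoose_add_one_succ]
      ring
    rw [h]
    have hP := gchooseReflProd_pos (a := 1/4) (by norm_num) (by norm_num) r
    refine lt_of_le_of_lt (mul_le_of_le_one_right hP.le ?_) hbound
    rw [div_le_one (by positivity)]
    linarith
  · simpa [gchooseReflProd] using hbound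
end
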